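/- arXiv:1804.06632 — 11 statements merged into one kernel-verified Lean document; each statement's English description precedes it below -/
import Mathlib

section
/- Let S = ⟨n₁,…,n_d⟩ be a numerical semigroup minimally generated by n₁,…,n_d and S' = ⟨n₁',…,n_{d'}'⟩ minimally generated by n₁',…,n_{d'}'. If k ∈ S and k' ∈ S' are not minimal generators and gcd(k,k') = 1, then the numerical semigroup T = k'S + kS' is minimally generated by the d + d' elements k'n₁, …, k'n_d, kn₁', …, kn_{d'}'. -/
open scoped Classical

/-- A numerical semigroup: a cofinite additive submonoid of ℕ. -/
def IsNumericalSemigroup (S : Set ℕ) : Prop :=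
  0 ∈ S ∧ (∀ a ∈ S, ∀ b ∈ S, a + b ∈ S) ∧ Sᶜ.Finite

/-- The set of nonnegative integer combinations of `n 0, …, n (d-1)`. -/
def genBy {d : ℕ} (n : Fin d → ℕ) : Set ℕ :=
  {m | ∃ a : Fin d → ℕ, m = ∑ i, a i * n i}

/-- `n` lists the (distinct) minimal generators of `S`: they generate `S` and each is
irreducible (nonzero and not a sum of two nonzero elements of `S`). -/
def IsMinGen {d : ℕ} (S : Set ℕ) (n : Fin d → ℕ) : Prop :=
  S = genBy n ∧ Function.Injective n ∧
    ∀ i, n i ≠ 0 ∧ ¬∃ a ∈ S, ∃ b ∈ S, a ≠ 0 ∧ b ≠ 0 ∧ n i = a + b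

/-- The squarefree divisor complex of `m` in `S` w.r.t. the generators `n`:
faces are the `F ⊆ [d]` with `m - ∑_{i ∈ F} n i ∈ S`. -/
def sdc {d : ℕ} (S : Set ℕ) (n : Fin d → ℕ) (m : ℕ) : Set (Finset (Fin d)) :=
  {F | ∃ s ∈ S, m = ∑ i ∈ F, n i + s}

/-- Euler characteristic of the squarefree divisor complex. -/
noncomputable def eulerChar {d : ℕ} (S : Set ℕ) (n : Fin d → ℕ) (m : ℕ) : ℤ :=
  ∑ F : Finset (Fin d), if F ∈ sdc S n m then (-1 : ℤ) ^ F.card else 0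

/-- The set of pseudo-Frobenius numbers of `S` (as integers). -/
def PF (S : Set ℕ) : Set ℤ :=
  {x | (¬∃ y ∈ S, (y : ℤ) = x) ∧ ∀ s ∈ S, s ≠ 0 → ∃ y ∈ S, (y : ℤ) = x + s}

lemma genBy_mem_single {d : ℕ} (n : Fin d → ℕ) (i : Fin d) : n i ∈ genBy n := by
  refine ⟨Pi.single i 1, ?_⟩
  simp [Pi.single_apply, Finset.sum_ite_eq']

lemma genBy_add {d : ℕ} {n : Fin d → ℕ} {x y : ℕ} (hx : x ∈ genBy n) (hy : y ∈ genBy n) :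
    x + y ∈ genBy n := by
  obtain ⟨a, rfl⟩ := hx; obtain ⟨b, rfl⟩ := hy
  exact ⟨a + b, by simp [add_mul, Finset.sum_add_distrib]⟩

lemma genBy_mul {d : ℕ} {n : Fin d → ℕ} {x : ℕ} (hx : x ∈ genBy n) (t : ℕ) :
    t * x ∈ genBy n := by
  obtain ⟨a, rfl⟩ := hx
  exact ⟨fun i => t * a i, by rw [Finset.mul_sum]; simp [mul_assoc]⟩

lemma genBy_cases {d : ℕ} {n : Fin d → ℕ} (hn : ∀ i, n i ≠ 0) {m : ℕ} (hm : m ∈ genBy n) :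
    m = 0 ∨ (∃ i, m = n i) ∨
      ∃ x ∈ genBy n, ∃ y ∈ genBy n, x ≠ 0 ∧ y ≠ 0 ∧ m = x + y := by
  obtain ⟨a, rfl⟩ := hm
  by_cases hall : ∀ i, a i = 0
  · left; simp [hall]
  push_neg at hall
  obtain ⟨i, hi⟩ := hall
  set a' : Fin d → ℕ := Function.update a i (a i - 1) with ha'
  have key : ∀ j, a j * n j = a' j * n j + (if j = i then n i else 0) := by
    intro j
    by_cases h : j = i
    · subst h
      simp only [ha', Function.update_self, Nat.sub_one_mul]
      rw [if_pos trivial, Nat.sub_add_cancel (Nat.le_mul_of_pos_left _ (Nat.pos_of_ne_zero hi))]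
    · simp [ha', Function.update_of_ne h, h]
  have hsplit : ∑ j, a j * n j = n i + ∑ j, a' j * n j := by
    rw [Finset.sum_congr rfl (fun j _ => key j), Finset.sum_add_distrib,
      Finset.sum_ite_eq' Finset.univ i (fun _ => n i)]
    simp [add_comm]
  by_cases hr : ∑ j, a' j * n j = 0
  · right; left; exact ⟨i, by rw [hsplit, hr, add_zero]⟩
  · right; right
    exact ⟨n i, genBy_mem_single n i, ∑ j, a' j * n j, ⟨a', rfl⟩, hn i, hr, hsplit⟩

lemma fin_add_cases {m n : ℕ} (x : Fin (m + n)) :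
    (∃ i, x = Fin.castAdd n i) ∨ ∃ j, x = Fin.natAdd m j :=
  Fin.addCases (fun i => Or.inl ⟨i, rfl⟩) (fun j => Or.inr ⟨j, rfl⟩) x

/-- Gluing: if `k ∈ S` and `k' ∈ S'` are not minimal generators and `gcd(k,k') = 1`, then
`T = k'S + kS'` is minimally generated by the `d + d'` elements
`k'n₁, …, k'n_d, kn₁', …, kn_{d'}'`. -/
theorem gluing_min_gen {d d' : ℕ} (S S' : Set ℕ) (n : Fin d → ℕ) (n' : Fin d' → ℕ)
    (hS : IsNumericalSemigroup S) (hS' : IsNumericalSemigroup S')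
    (hmin : IsMinGen S n) (hmin' : IsMinGen S' n')
    (k k' : ℕ) (hk : k ∈ S) (hk' : k' ∈ S')
    (hknotgen : ∀ i, k ≠ n i) (hk'notgen : ∀ j, k' ≠ n' j)
    (hcop : Nat.Coprime k k') :
    IsMinGen {x | ∃ s ∈ S, ∃ s' ∈ S', x = k' * s + k * s'}
      (Fin.append (fun i => k' * n i) (fun j => k * n' j)) := by
  obtain ⟨hSgen, hninj, hirr⟩ := hmin
  obtain ⟨hS'gen, hn'inj, hirr'⟩ := hmin'
  have hn0 : ∀ i, n i ≠ 0 := fun i => (hirr i).1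
  have hn'0 : ∀ j, n' j ≠ 0 := fun j => (hirr' j).1
  have hkg : k ∈ genBy n := hSgen ▸ hk
  have hk'g : k' ∈ genBy n' := hS'gen ▸ hk'
  have hkne1 : k ≠ 1 := by
    intro h
    rcases genBy_cases hn0 hkg with h0 | ⟨i, hi⟩ | ⟨x, _, y, _, hx0, hy0, hxy⟩
    · omega
    · exact hknotgen i hi
    · omega
  have hk'ne1 : k' ≠ 1 := by
    intro h
    rcases genBy_cases hn'0 hk'g with h0 | ⟨j, hj⟩ | ⟨x, _, y, _, hx0, hy0, hxy⟩
    · omega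
    · exact hk'notgen j hj
    · omega
  have hk0 : k ≠ 0 := by
    intro h; exact hk'ne1 (by simpa [h] using hcop)
  have hk'0 : k' ≠ 0 := by
    intro h; exact hkne1 (by simpa [h, Nat.coprime_zero_right] using hcop)
  have hmulS : ∀ t, k * t ∈ S := by
    intro t; rw [hSgen, mul_comm]; exact genBy_mul hkg t
  have hmulS' : ∀ t, k' * t ∈ S' := by
    intro t; rw [hS'gen, mul_comm]; exact genBy_mul hk'g t
  -- no generator is a multiple of k (resp. k')
  have hnm : ∀ i t, n i ≠ k * t := by
    intro i t h
    match t with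
    | 0 => exact hn0 i (by simpa using h)
    | 1 => exact hknotgen i (by simpa using h.symm)
    | (t + 2) =>
      refine (hirr i).2 ⟨k, hk, k * (t + 1), hmulS (t + 1), hk0,
        Nat.mul_ne_zero hk0 (Nat.succ_ne_zero t), ?_⟩
      rw [h]; ring
  have hnm' : ∀ j t, n' j ≠ k' * t := by
    intro j t h
    match t with
    | 0 => exact hn'0 j (by simpa using h)
    | 1 => exact hk'notgen j (by simpa using h.symm)
    | (t + 2) =>
      refine (hirr' j).2 ⟨k', hk', k' * (t + 1), hmulS' (t + 1), hk'0,
        Nat.mul_ne_zero hk'0 (Nat.succ_ne_zero t), ?_⟩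
      rw [h]; ring
  refine ⟨?_, ?_, ?_⟩
  · -- generation
    ext x
    simp only [Set.mem_setOf_eq]
    constructor
    · rintro ⟨s, hs, s', hs', rfl⟩
      rw [hSgen] at hs; rw [hS'gen] at hs'
      obtain ⟨a, rfl⟩ := hs; obtain ⟨b, rfl⟩ := hs'
      refine ⟨Fin.append a b, ?_⟩
      rw [Fin.sum_univ_add]
      congr 1
      · rw [Finset.mul_sum]
        exact Finset.sum_congr rfl fun i _ => by
          simp [Fin.append_left]; ring
      · rw [Finset.mul_sum]
        exact Finset.sum_congr rfl fun j _ => by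
          simp [Fin.append_right]; ring
    · rintro ⟨c, rfl⟩
      refine ⟨∑ i, c (Fin.castAdd d' i) * n i, by rw [hSgen]; exact ⟨_, rfl⟩,
        ∑ j, c (Fin.natAdd d j) * n' j, by rw [hS'gen]; exact ⟨_, rfl⟩, ?_⟩
      rw [Fin.sum_univ_add]
      congr 1
      · rw [Finset.mul_sum]
        exact Finset.sum_congr rfl fun i _ => by
          simp [Fin.append_left]; ring
      · rw [Finset.mul_sum]
        exact Finset.sum_congr rfl fun j _ => by
          simp [Fin.append_right]; ring
  · -- injectivity
    have cross : ∀ i j, k' * n i ≠ k * n' j := by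
      intro i j h
      have hdvd : k' ∣ n' j := by
        exact hcop.symm.dvd_of_dvd_mul_left ⟨n i, h.symm⟩
      obtain ⟨t, ht⟩ := hdvd
      exact hnm' j t ht
    intro x y hxy
    rcases fin_add_cases x with ⟨i, rfl⟩ | ⟨i, rfl⟩ <;>
      rcases fin_add_cases y with ⟨i', rfl⟩ | ⟨i', rfl⟩ <;>
      simp only [Fin.append_left, Fin.append_right] at hxy
    · have : n i = n i' := Nat.eq_of_mul_eq_mul_left (Nat.pos_of_ne_zero hk'0) hxy
      rw [hninj this]
    · exact absurd hxy (cross i i')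
    · exact absurd hxy.symm (cross i' i)
    · have : n' i = n' i' := Nat.eq_of_mul_eq_mul_left (Nat.pos_of_ne_zero hk0) hxy
      rw [hn'inj this]
  · -- irreducibility
    intro x
    rcases fin_add_cases x with ⟨i, rfl⟩ | ⟨j, rfl⟩
    · rw [Fin.append_left]
      refine ⟨Nat.mul_ne_zero hk'0 (hn0 i), ?_⟩
      rintro ⟨a, ⟨s₁, hs₁, s₁', hs₁', rfl⟩, b, ⟨s₂, hs₂, s₂', hs₂', rfl⟩, ha0, hb0, heq⟩
      have h1 : k' * n i = k' * (s₁ + s₂) + k * (s₁' + s₂') := by rw [heq]; ring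
      have hle : s₁ + s₂ ≤ n i :=
        Nat.le_of_mul_le_mul_left (Nat.le.intro h1.symm) (Nat.pos_of_ne_zero hk'0)
      set w := n i - (s₁ + s₂) with hw
      have hni : n i = (s₁ + s₂) + w := by omega
      have hkw : k' * w = k * (s₁' + s₂') := by
        have := h1
        rw [hni, mul_add] at this
        omega
      have hdvd : k' ∣ s₁' + s₂' := by
        exact hcop.symm.dvd_of_dvd_mul_left ⟨w, hkw.symm⟩
      obtain ⟨t, ht⟩ := hdvd
      have hwt : w = k * t := by
        have h2 : k' * w = k' * (k * t) := by rw [hkw, ht]; ring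
        exact Nat.eq_of_mul_eq_mul_left (Nat.pos_of_ne_zero hk'0) h2
      by_cases hu : s₁ + s₂ = 0
      · exact hnm i t (by rw [hni, hu, hwt, zero_add])
      by_cases ht0 : t = 0
      · have hz : s₁' + s₂' = 0 := by rw [ht, ht0, mul_zero]
        have h1' : s₁' = 0 := by omega
        have h2' : s₂' = 0 := by omega
        subst h1'; subst h2'
        simp only [mul_zero, add_zero] at ha0 hb0
        refine (hirr i).2 ⟨s₁, hs₁, s₂, hs₂, ?_, ?_, ?_⟩
        · intro h; simp [h] at ha0
        · intro h; simp [h] at hb0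
        · rw [hni, hwt, ht0, mul_zero, add_zero]
      · refine (hirr i).2 ⟨s₁ + s₂, hS.2.1 _ hs₁ _ hs₂, k * t, hmulS t, hu,
          Nat.mul_ne_zero hk0 ht0, by rw [hni, hwt]⟩
    · rw [Fin.append_right]
      refine ⟨Nat.mul_ne_zero hk0 (hn'0 j), ?_⟩
      rintro ⟨a, ⟨s₁, hs₁, s₁', hs₁', rfl⟩, b, ⟨s₂, hs₂, s₂', hs₂', rfl⟩, ha0, hb0, heq⟩
      have h1 : k * n' j = k * (s₁' + s₂') + k' * (s₁ + s₂) := by rw [heq]; ring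
      have hle : s₁' + s₂' ≤ n' j :=
        Nat.le_of_mul_le_mul_left (Nat.le.intro h1.symm) (Nat.pos_of_ne_zero hk0)
      set w := n' j - (s₁' + s₂') with hw
      have hni : n' j = (s₁' + s₂') + w := by omega
      have hkw : k * w = k' * (s₁ + s₂) := by
        have := h1
        rw [hni, mul_add] at this
        omega
      have hdvd : k ∣ s₁ + s₂ := by
        exact hcop.dvd_of_dvd_mul_left ⟨w, hkw.symm⟩
      obtain ⟨t, ht⟩ := hdvd
      have hwt : w = k' * t := by
        have h2 : k * w = k * (k' * t) := by rw [hkw, ht]; ring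
        exact Nat.eq_of_mul_eq_mul_left (Nat.pos_of_ne_zero hk0) h2
      by_cases hu : s₁' + s₂' = 0
      · exact hnm' j t (by rw [hni, hu, hwt, zero_add])
      by_cases ht0 : t = 0
      · have hz : s₁ + s₂ = 0 := by rw [ht, ht0, mul_zero]
        have h1' : s₁ = 0 := by omega
        have h2' : s₂ = 0 := by omega
        subst h1'; subst h2'
        simp only [mul_zero, zero_add] at ha0 hb0
        refine (hirr' j).2 ⟨s₁', hs₁', s₂', hs₂', ?_, ?_, ?_⟩
        · intro h; simp [h] at ha0
        · intro h; simp [h] at hb0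
        · rw [hni, hwt, ht0, mul_zero, add_zero]
      · refine (hirr' j).2 ⟨s₁' + s₂', hS'.2.1 _ hs₁' _ hs₂', k' * t, hmulS' t, hu,
          Nat.mul_ne_zero hk'0 ht0, by rw [hni, hwt]⟩
end

section
/- Let S = ⟨n₁,…,n_d⟩ and S' = ⟨n₁',…,n_{d'}'⟩ be numerical semigroups with minimal generating sets as indicated, let k ∈ S and k' ∈ S' with gcd(k,k') = 1, and let T = k'S + kS'. Then the squarefree divisor complex Δ_{kk'}^T (with respect to the generators k'n₁,…,k'n_d, kn₁',…,kn_{d'}') equals the disjoint union of Δ_k^S (on vertex set [d]) and Δ_{k'}^{S'} shifted by d (on vertex set [d+d'] \ [d]). In particular, no face of Δ_{kk'}^T contains a vertex from [d] and a vertex from [d+d'] \ [d]. -/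
open scoped Classical

lemma natAdd_inj {d d' : ℕ} : Function.Injective (Fin.natAdd d : Fin d' → Fin (d + d')) := by
  intro a b h
  have := congrArg Fin.val h
  simp [Fin.natAdd] at this
  exact Fin.ext this

lemma finset_split {d d' : ℕ} (F : Finset (Fin (d + d'))) :
    F = (Finset.univ.filter fun i : Fin d => Fin.castAdd d' i ∈ F).image (Fin.castAdd d') ∪
        (Finset.univ.filter fun j : Fin d' => Fin.natAdd d j ∈ F).image (Fin.natAdd d) := by
  ext i
  simp only [Finset.mem_union, Finset.mem_image, Finset.mem_filter, Finset.mem_univ, true_and]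
  constructor
  · intro hi
    rcases lt_or_ge (i : ℕ) d with h | h
    · exact Or.inl ⟨⟨i, h⟩, by rwa [show Fin.castAdd d' ⟨(i:ℕ), h⟩ = i from Fin.ext rfl], Fin.ext rfl⟩
    · refine Or.inr ⟨⟨(i:ℕ) - d, by omega⟩, ?_, ?_⟩ <;>
        rw [show Fin.natAdd d ⟨(i:ℕ) - d, by omega⟩ = i from Fin.ext (by simp [Fin.natAdd]; omega)]
      exact hi
  · rintro (⟨a, ha, rfl⟩ | ⟨b, hb, rfl⟩) <;> assumption

lemma sum_split {d d' : ℕ} (u : Fin d → ℕ) (v : Fin d' → ℕ) (F : Finset (Fin (d + d'))) :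
    ∑ i ∈ F, Fin.append u v i =
      ∑ i ∈ Finset.univ.filter (fun i : Fin d => Fin.castAdd d' i ∈ F), u i +
      ∑ j ∈ Finset.univ.filter (fun j : Fin d' => Fin.natAdd d j ∈ F), v j := by
  conv_lhs => rw [finset_split F]
  rw [Finset.sum_union, Finset.sum_image (fun a _ b _ h => Fin.castAdd_injective _ _ h),
    Finset.sum_image (fun a _ b _ h => natAdd_inj h)]
  · simp [Fin.append_left, Fin.append_right]
  · rw [Finset.disjoint_left]
    rintro x hx hy
    simp only [Finset.mem_image, Finset.mem_filter] at hx hy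
    obtain ⟨a, _, rfl⟩ := hx
    obtain ⟨b, _, hb⟩ := hy
    have := congrArg Fin.val hb
    simp [Fin.natAdd, Fin.castAdd, Fin.castLE] at this
    omega

lemma sum_image_castAdd {d d' : ℕ} (u : Fin d → ℕ) (v : Fin d' → ℕ) (A : Finset (Fin d)) :
    ∑ i ∈ A.image (Fin.castAdd d'), Fin.append u v i = ∑ i ∈ A, u i := by
  rw [Finset.sum_image (fun a _ b _ h => Fin.castAdd_injective _ _ h)]
  simp [Fin.append_left]

lemma sum_image_natAdd {d d' : ℕ} (u : Fin d → ℕ) (v : Fin d' → ℕ) (B : Finset (Fin d')) :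
    ∑ i ∈ B.image (Fin.natAdd d), Fin.append u v i = ∑ j ∈ B, v j := by
  rw [Finset.sum_image (fun a _ b _ h => natAdd_inj h)]
  simp [Fin.append_right]

lemma univ_of_one_mem {S : Set ℕ} (hS : IsNumericalSemigroup S) (h1 : (1 : ℕ) ∈ S) :
    ∀ m : ℕ, m ∈ S := by
  intro m
  induction m with
  | zero => exact hS.1
  | succ m ih => exact hS.2.1 m ih 1 h1

lemma gen_eq_one {d : ℕ} {S : Set ℕ} {n : Fin d → ℕ} (hS : IsNumericalSemigroup S)
    (hmin : IsMinGen S n) (h1 : (1 : ℕ) ∈ S) (i : Fin d) : n i = 1 := by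
  obtain ⟨hne, hirr⟩ := hmin.2.2 i
  by_contra h
  exact hirr ⟨1, h1, n i - 1, univ_of_one_mem hS h1 _, by omega, by omega, by omega⟩

lemma sdc_one {d : ℕ} {S : Set ℕ} {n : Fin d → ℕ} (hS : IsNumericalSemigroup S)
    (hmin : IsMinGen S n) (h1 : (1 : ℕ) ∈ S) (B : Finset (Fin d)) : B ∈ sdc S n 1 := by
  have hcard : B.card ≤ 1 := Finset.card_le_one.mpr fun a _ b _ =>
    hmin.2.1 (by rw [gen_eq_one hS hmin h1, gen_eq_one hS hmin h1])
  have hsum : ∑ i ∈ B, n i = B.card := by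
    rw [Finset.sum_congr rfl fun i _ => gen_eq_one hS hmin h1 i]
    simp
  exact ⟨1 - B.card, univ_of_one_mem hS h1 _, by rw [hsum]; omega⟩

theorem mem_sdc_iff {d d' : ℕ} (S S' : Set ℕ) (n : Fin d → ℕ) (n' : Fin d' → ℕ)
    (hS : IsNumericalSemigroup S) (hS' : IsNumericalSemigroup S')
    (hmin : IsMinGen S n) (hmin' : IsMinGen S' n')
    (k k' : ℕ) (hk : k ∈ S) (hk' : k' ∈ S') (hcop : Nat.Coprime k k')
    (F : Finset (Fin (d + d'))) :
    F ∈ sdc {x | ∃ s ∈ S, ∃ s' ∈ S', x = k' * s + k * s'}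
        (Fin.append (fun i => k' * n i) (fun j => k * n' j)) (k * k') ↔
      (∃ A ∈ sdc S n k, F = A.image (Fin.castAdd d')) ∨
      (∃ B ∈ sdc S' n' k', F = B.image (Fin.natAdd d)) := by
  constructor
  · rintro ⟨t, ⟨s, hs, s', hs', rfl⟩, heq⟩
    set A := Finset.univ.filter (fun i : Fin d => Fin.castAdd d' i ∈ F) with hA
    set B := Finset.univ.filter (fun j : Fin d' => Fin.natAdd d j ∈ F) with hB
    rw [sum_split] at heq
    have hsumA : ∑ i ∈ A, k' * n i = k' * ∑ i ∈ A, n i := by rw [Finset.mul_sum]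
    have hsumB : ∑ j ∈ B, k * n' j = k * ∑ j ∈ B, n' j := by rw [Finset.mul_sum]
    rw [hsumA, hsumB] at heq
    set u := (∑ i ∈ A, n i) + s with hu
    set v := (∑ j ∈ B, n' j) + s' with hv
    have key : k * k' = k' * u + k * v := by rw [hu, hv]; ring_nf; ring_nf at heq; omega
    have hFsplit := finset_split F
    rw [← hA, ← hB] at hFsplit
    have hAempty : (∑ i ∈ A, n i = 0 ∧ s = 0) → F = B.image (Fin.natAdd d) := by
      rintro ⟨h0, -⟩
      have : A = ∅ := by
        by_contra hne
        obtain ⟨i, hi⟩ := Finset.nonempty_iff_ne_empty.mpr hne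
        have := (hmin.2.2 i).1
        have h1 : n i ≤ ∑ i ∈ A, n i := Finset.single_le_sum (fun _ _ => Nat.zero_le _) hi
        omega
      rw [hFsplit, this]
      simp
    have hBempty : (∑ j ∈ B, n' j = 0 ∧ s' = 0) → F = A.image (Fin.castAdd d') := by
      rintro ⟨h0, -⟩
      have : B = ∅ := by
        by_contra hne
        obtain ⟨j, hj⟩ := Finset.nonempty_iff_ne_empty.mpr hne
        have := (hmin'.2.2 j).1
        have h1 : n' j ≤ ∑ j ∈ B, n' j := Finset.single_le_sum (fun _ _ => Nat.zero_le _) hj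
        omega
      rw [hFsplit, this]
      simp
    rcases Nat.eq_zero_or_pos k with hk0 | hkpos
    · -- k = 0, so k' = 1
      have hk'1 : k' = 1 := by
        have := hcop
        rw [hk0] at this
        simpa [Nat.Coprime] using this
      subst hk0; subst hk'1
      simp only [Nat.zero_mul, Nat.mul_zero, Nat.one_mul] at key
      refine Or.inr ⟨B, sdc_one hS' hmin' hk' B, hAempty ⟨by omega, by omega⟩⟩
    rcases Nat.eq_zero_or_pos k' with hk'0 | hk'pos
    · have hk1 : k = 1 := by
        have := hcop
        rw [hk'0] at this
        simpa [Nat.Coprime] using this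
      subst hk'0; subst hk1
      simp only [Nat.zero_mul, Nat.mul_zero, Nat.one_mul, Nat.mul_one, Nat.add_zero,
        Nat.zero_add] at key
      refine Or.inl ⟨A, sdc_one hS hmin hk A, hBempty ⟨by omega, by omega⟩⟩
    -- main case k, k' > 0
    have hdvd : k ∣ u := by
      have h1 : k ∣ k' * u := by
        have : k' * u = k * k' - k * v := by omega
        rw [this]
        exact Nat.dvd_sub (Dvd.intro k' rfl) (Dvd.intro v rfl)
      exact hcop.dvd_of_dvd_mul_left h1
    obtain ⟨a, hua⟩ := hdvd
    have key2 : k' = k' * a + v := by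
      have h2 : k * k' = k * (k' * a + v) := by
        calc k * k' = k' * (k * a) + k * v := by rw [← hua]; exact key
        _ = k * (k' * a + v) := by ring
      exact Nat.eq_of_mul_eq_mul_left hkpos h2
    rcases Nat.eq_zero_or_pos a with ha | ha
    · subst ha
      simp only [Nat.mul_zero] at key2 hua
      refine Or.inr ⟨B, ⟨s', hs', by omega⟩, hAempty ⟨by omega, by omega⟩⟩
    · have h1 : k' ≤ k' * a := Nat.le_mul_of_pos_right k' ha
      have hv0 : v = 0 := by linarith
      have ha1 : a = 1 := by
        have h2 : k' * a = k' * 1 := by omega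
        exact Nat.eq_of_mul_eq_mul_left hk'pos h2
      subst ha1
      refine Or.inl ⟨A, ⟨s, hs, by omega⟩, hBempty ⟨by omega, by omega⟩⟩
  · rintro (⟨A, ⟨s, hs, hks⟩, rfl⟩ | ⟨B, ⟨s', hs', hks'⟩, rfl⟩)
    · refine ⟨k' * s + k * 0, ⟨s, hs, 0, hS'.1, rfl⟩, ?_⟩
      rw [sum_image_castAdd, ← Finset.mul_sum]
      rw [hks]
      ring
    · refine ⟨k' * 0 + k * s', ⟨0, hS.1, s', hs', rfl⟩, ?_⟩
      rw [sum_image_natAdd, ← Finset.mul_sum]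
      rw [hks']
      ring

/-- Disjoint union theorem: for coprime `k ∈ S`, `k' ∈ S'` and `T = k'S + kS'`,
the complex `Δ_{kk'}^T` is the disjoint union of `Δ_k^S` (on vertices `[d]`) and
`Δ_{k'}^{S'}` shifted by `d`; in particular no face contains vertices from both sides. -/
theorem sdc_disjoint_union {d d' : ℕ} (S S' : Set ℕ) (n : Fin d → ℕ) (n' : Fin d' → ℕ)
    (hS : IsNumericalSemigroup S) (hS' : IsNumericalSemigroup S')
    (hmin : IsMinGen S n) (hmin' : IsMinGen S' n')
    (k k' : ℕ) (hk : k ∈ S) (hk' : k' ∈ S') (hcop : Nat.Coprime k k') :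
    (∀ F ∈ sdc {x | ∃ s ∈ S, ∃ s' ∈ S', x = k' * s + k * s'}
        (Fin.append (fun i => k' * n i) (fun j => k * n' j)) (k * k'),
      (∀ i ∈ F, (i : ℕ) < d) ∨ (∀ i ∈ F, d ≤ (i : ℕ))) ∧
    sdc {x | ∃ s ∈ S, ∃ s' ∈ S', x = k' * s + k * s'}
        (Fin.append (fun i => k' * n i) (fun j => k * n' j)) (k * k') =
      (fun F : Finset (Fin d) => F.image (Fin.castAdd d')) '' sdc S n k ∪
      (fun F : Finset (Fin d') => F.image (Fin.natAdd d)) '' sdc S' n' k' := by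
  constructor
  · intro F hF
    rcases (mem_sdc_iff S S' n n' hS hS' hmin hmin' k k' hk hk' hcop F).mp hF with
      ⟨A, -, rfl⟩ | ⟨B, -, rfl⟩
    · left
      intro i hi
      simp only [Finset.mem_image] at hi
      obtain ⟨a, -, rfl⟩ := hi
      exact a.isLt
    · right
      intro i hi
      simp only [Finset.mem_image] at hi
      obtain ⟨b, -, rfl⟩ := hi
      simp [Fin.natAdd]
  · ext F
    rw [mem_sdc_iff S S' n n' hS hS' hmin hmin' k k' hk hk' hcop F]
    simp only [Set.mem_union, Set.mem_image]
    constructor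
    · rintro (⟨A, hA, h⟩ | ⟨B, hB, h⟩)
      · exact Or.inl ⟨A, hA, h.symm⟩
      · exact Or.inr ⟨B, hB, h.symm⟩
    · rintro (⟨A, hA, h⟩ | ⟨B, hB, h⟩)
      · exact Or.inl ⟨A, hA, h.symm⟩
      · exact Or.inr ⟨B, hB, h.symm⟩
end

section
/- In the setting of the inflation construction: if pm = a₀b + Σ_{i=1}^d a_i·(p n_i) is a factorization with a₀ > 0, where b = m − n_F ∈ S, gcd(p,b) = 1 (and p divides pm − a₀b implies p ∣ a₀b, hence p ∣ a₀), then writing a₀ = kp with k ≥ 1, one obtains n_F = (k−1)(m − n_F) + Σ_{i=1}^d a_i n_i, i.e., a factorization of n_F in S. If moreover Δ_{n_F} = 2^F, then a_i = 0 for all i ∉ F. -/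
open scoped Classical

/-- Key computation in the inflation construction: if `pm = a₀ b + ∑ aᵢ (p nᵢ)` with
`a₀ > 0`, `b = m - n_F ∈ S` and `gcd(p,b) = 1`, then `a₀ = kp` with `k ≥ 1` and
`n_F = (k-1)(m - n_F) + ∑ aᵢ nᵢ`; if moreover `Δ_{n_F} = 2^F` then `aᵢ = 0` for `i ∉ F`. -/
theorem inflation_factorization {d : ℕ} (S : Set ℕ) (n : Fin d → ℕ)
    (hS : IsNumericalSemigroup S) (hmin : IsMinGen S n)
    (m : ℕ) (hm : m ∈ S) (F : Finset (Fin d)) (b p : ℕ)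
    (hb : (∑ i ∈ F, n i) + b = m) (hbS : b ∈ S) (hcop : Nat.Coprime p b)
    (a₀ : ℕ) (a : Fin d → ℕ) (ha₀ : 0 < a₀)
    (hfac : p * m = a₀ * b + ∑ i, a i * (p * n i)) :
    ∃ k : ℕ, 1 ≤ k ∧ a₀ = k * p ∧
      (∑ i ∈ F, n i) = (k - 1) * b + ∑ i, a i * n i ∧
      ((sdc S n (∑ i ∈ F, n i) = {G : Finset (Fin d) | G ⊆ F}) →
        ∀ i, i ∉ F → a i = 0) := by
  have hp : p ≠ 0 := by
    rintro rfl
    rw [Nat.coprime_zero_left] at hcop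
    simp [hcop] at hfac
    omega
  have hfac' : p * m = a₀ * b + p * ∑ j, a j * n j := by
    rw [hfac]
    congr 1
    rw [Finset.mul_sum]
    exact Finset.sum_congr rfl fun j _ => by ring
  have hdvd : p ∣ a₀ := by
    have h1 : p ∣ a₀ * b := by
      have : a₀ * b = p * m - p * ∑ j, a j * n j := by omega
      exact this ▸ Nat.dvd_sub (Dvd.intro m rfl) (Dvd.intro _ rfl)
    exact hcop.dvd_of_dvd_mul_right h1
  obtain ⟨k, rfl⟩ := hdvd
  have hk : 1 ≤ k := by
    rcases Nat.eq_zero_or_pos k with h | h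
    · simp [h] at ha₀
    · exact h
  obtain ⟨k', rfl⟩ : ∃ k', k = k' + 1 := ⟨k - 1, by omega⟩
  have hm' : m = (k' + 1) * b + ∑ j, a j * n j := by
    have : p * m = p * ((k' + 1) * b + ∑ j, a j * n j) := by rw [hfac']; ring
    exact Nat.eq_of_mul_eq_mul_left (Nat.pos_of_ne_zero hp) this
  have hkb : (k' + 1) * b = k' * b + b := by ring
  have hNF : (∑ i ∈ F, n i) = (k' + 1 - 1) * b + ∑ j, a j * n j := by
    simp only [Nat.add_sub_cancel]; omega
  refine ⟨k' + 1, hk, mul_comm p (k' + 1), hNF, ?_⟩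
  intro hΔ i hiF
  simp only [Nat.add_sub_cancel] at hNF
  obtain ⟨β, hβ⟩ : b ∈ genBy n := hmin.1 ▸ hbS
  set G : Finset (Fin d) := Finset.univ.filter (fun j => a j ≠ 0) with hG
  set s : ℕ := ∑ j, (k' * β j + (a j - if a j ≠ 0 then 1 else 0)) * n j with hs
  have hsS : s ∈ S := hmin.1 ▸ ⟨_, rfl⟩
  have hGsdc : G ∈ sdc S n (∑ i ∈ F, n i) := by
    refine ⟨s, hsS, ?_⟩
    rw [hNF, hG, Finset.sum_filter, hs, ← Finset.sum_add_distrib, hβ,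
      Finset.mul_sum, ← Finset.sum_add_distrib]
    refine Finset.sum_congr rfl fun j _ => ?_
    by_cases h : a j = 0
    · simp [h, mul_assoc]
    · obtain ⟨t, ht⟩ : ∃ t, a j = t + 1 := ⟨a j - 1, by omega⟩
      simp only [ht, ne_eq, Nat.succ_ne_zero, not_false_iff, if_true,
        Nat.add_sub_cancel]
      ring
  have hGF : G ⊆ F := by
    have := hΔ ▸ hGsdc
    exact this
  by_contra hai
  exact hiF (hGF (by simp [hG, hai]))
end

section
/- Let t₁,…,t_d ∈ ℤ_{≥2} be pairwise coprime, L = t₁t₂⋯t_d, and S = ⟨L/t₁,…,L/t_d⟩. For any k ∈ ℕ, the squarefree divisor complex Δ_{kL}^S consists exactly of those subsets F ⊆ [d] with |F| ≤ k; that is, for F ⊆ [d], kL − Σ_{i∈F} L/t_i ∈ S if and only if |F| ≤ k. -/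
open scoped Classical

/-- Supersymmetric semigroups: for pairwise coprime `tᵢ ≥ 2`, `L = ∏ tᵢ`, and
`S = ⟨L/t₁, …, L/t_d⟩`, the complex `Δ_{kL}` consists exactly of the `F` with `|F| ≤ k`. -/
theorem supersymmetric_sdc {d : ℕ} (hd : 0 < d) (t : Fin d → ℕ) (ht : ∀ i, 2 ≤ t i)
    (hcop : ∀ i j, i ≠ j → Nat.Coprime (t i) (t j)) (k : ℕ) (F : Finset (Fin d)) :
    F ∈ sdc (genBy fun i => (∏ j, t j) / t i) (fun i => (∏ j, t j) / t i)
        (k * ∏ j, t j) ↔ F.card ≤ k := by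
  classical
  set L := ∏ j, t j with hLdef
  have htpos : ∀ i, 0 < t i := fun i => lt_of_lt_of_le two_pos (ht i)
  have hLpos : 0 < L := Finset.prod_pos fun i _ => htpos i
  set n : Fin d → ℕ := fun i => L / t i with hn
  have hne : ∀ i, n i = ∏ l ∈ Finset.univ.erase i, t l := by
    intro i
    have h := Finset.mul_prod_erase Finset.univ t (Finset.mem_univ i)
    simp only [hn]
    rw [hLdef, ← h, Nat.mul_div_cancel_left _ (htpos i)]
  have hmul : ∀ i, t i * n i = L := by
    intro i; rw [hne i]
    exact Finset.mul_prod_erase Finset.univ t (Finset.mem_univ i)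
  have hdvd : ∀ i j, j ≠ i → t j ∣ n i := by
    intro i j hji; rw [hne i]
    exact Finset.dvd_prod_of_mem t (Finset.mem_erase.mpr ⟨hji, Finset.mem_univ j⟩)
  have hcopn : ∀ j, Nat.Coprime (t j) (n j) := by
    intro j; rw [hne j]
    exact Nat.Coprime.prod_right fun l hl =>
      hcop j l (Ne.symm (Finset.mem_erase.mp hl).1)
  constructor
  · rintro ⟨s, ⟨a, rfl⟩, hs⟩
    set c : Fin d → ℕ := fun i => (if i ∈ F then 1 else 0) + a i with hc
    have hsum : k * L = ∑ i, c i * n i := by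
      rw [hs]
      simp only [hc, add_mul, ite_mul, one_mul, zero_mul, Finset.sum_add_distrib,
        Finset.sum_ite_mem, Finset.univ_inter]
    have hbd : ∀ j, t j ∣ c j := by
      intro j
      have h1 : t j ∣ ∑ i ∈ Finset.univ.erase j, c i * n i :=
        Finset.dvd_sum fun i hi =>
          dvd_mul_of_dvd_right (hdvd i j (Ne.symm (Finset.mem_erase.mp hi).1)) (c i)
      have h2 : t j ∣ k * L :=
        dvd_mul_of_dvd_right (Finset.dvd_prod_of_mem t (Finset.mem_univ j)) k
      rw [hsum, ← Finset.add_sum_erase _ _ (Finset.mem_univ j)] at h2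
      have h4 : t j ∣ c j * n j := (Nat.dvd_add_iff_left h1).mpr h2
      exact (hcopn j).dvd_of_dvd_mul_right h4
    choose b hb using hbd
    have hk : k * L = (∑ j, b j) * L := by
      rw [hsum, Finset.sum_mul]
      refine Finset.sum_congr rfl fun j _ => ?_
      rw [hb j, mul_comm (t j) (b j), mul_assoc, hmul j]
    have hk' : k = ∑ j, b j := Nat.eq_of_mul_eq_mul_right hLpos hk
    have hF : F.card ≤ ∑ j, b j := by
      calc F.card = ∑ j ∈ F, 1 := by simp
        _ ≤ ∑ j ∈ F, b j := Finset.sum_le_sum fun j hj => by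
            have h0 := hb j
            simp only [hc, if_pos hj] at h0
            rcases Nat.eq_zero_or_pos (b j) with h | h
            · rw [h, mul_zero] at h0; omega
            · exact h
        _ ≤ ∑ j, b j := Finset.sum_le_sum_of_subset (Finset.subset_univ F)
    omega
  · intro hFk
    have i0 : Fin d := ⟨0, hd⟩
    refine ⟨(∑ i ∈ F, (t i - 1) * n i) + (k - F.card) * L, ?_, ?_⟩
    · refine ⟨fun i => (if i ∈ F then t i - 1 else 0) +
        (if i = i0 then (k - F.card) * t i0 else 0), ?_⟩
      simp only [add_mul, ite_mul, zero_mul, Finset.sum_add_distrib,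
        Finset.sum_ite_mem, Finset.univ_inter, Finset.sum_ite_eq',
        Finset.mem_univ, if_pos]
      rw [mul_assoc, hmul i0]
    · have h1 : ∑ i ∈ F, n i + ∑ i ∈ F, (t i - 1) * n i = F.card * L := by
        rw [← Finset.sum_add_distrib]
        have : ∀ i ∈ F, n i + (t i - 1) * n i = L := by
          intro i _
          have h2 : n i + (t i - 1) * n i = t i * n i := by
            have := htpos i
            cases' Nat.exists_eq_add_of_le (htpos i) with m hm
            rw [hm, Nat.add_sub_cancel_left]; ring
          rw [h2, hmul i]
        rw [Finset.sum_congr rfl this, Finset.sum_const, smul_eq_mul]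
      rw [← add_assoc, h1, ← add_mul]
      congr 1
      omega
end

section
/- Let t₁,…,t_d ∈ ℤ_{≥2} be pairwise coprime, L = t₁⋯t_d, and S = ⟨L/t₁,…,L/t_d⟩. If m ∈ S and L does not divide m, then the Euler characteristic of the squarefree divisor complex Δ_m^S is zero. -/
open scoped Classical

/-- In a supersymmetric semigroup, every element not divisible by `L` has squarefree
divisor complex with zero Euler characteristic. -/
theorem supersymmetric_eulerChar_zero {d : ℕ} (hd : 0 < d) (t : Fin d → ℕ)
    (ht : ∀ i, 2 ≤ t i) (hcop : ∀ i j, i ≠ j → Nat.Coprime (t i) (t j))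
    (m : ℕ) (hm : m ∈ genBy fun i => (∏ j, t j) / t i)
    (hL : ¬(∏ j, t j) ∣ m) :
    eulerChar (genBy fun i => (∏ j, t j) / t i) (fun i => (∏ j, t j) / t i) m = 0 := by
  classical
  set L := ∏ j, t j with hLdef
  set n : Fin d → ℕ := fun i => L / t i with hndef
  have htpos : ∀ i, 0 < t i := fun i => lt_of_lt_of_le two_pos (ht i)
  have htdvd : ∀ i, t i ∣ L := fun i => Finset.dvd_prod_of_mem t (Finset.mem_univ i)
  have hnt : ∀ i, n i * t i = L := fun i => Nat.div_mul_cancel (htdvd i)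
  have hnprod : ∀ i, n i = ∏ j ∈ Finset.univ.erase i, t j := by
    intro i
    have h1 : L = t i * ∏ j ∈ Finset.univ.erase i, t j :=
      (Finset.mul_prod_erase _ _ (Finset.mem_univ i)).symm
    show L / t i = _
    rw [h1, Nat.mul_div_cancel_left _ (htpos i)]
  have hcop' : ∀ i, Nat.Coprime (t i) (n i) := by
    intro i
    rw [hnprod i]
    exact Nat.Coprime.prod_right fun j hj =>
      hcop i j (fun h => (Finset.mem_erase.mp hj).1 h.symm)
  have hdvdn : ∀ i j, i ≠ j → t i ∣ n j := by
    intro i j hij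
    rw [hnprod j]
    exact Finset.dvd_prod_of_mem t (Finset.mem_erase.mpr ⟨hij, Finset.mem_univ i⟩)
  obtain ⟨a, ha⟩ := hm
  -- there is an index i₀ with t i₀ ∤ a i₀
  have hex : ∃ i, ¬ t i ∣ a i := by
    by_contra h
    push_neg at h
    apply hL
    have : m = (∑ i, a i / t i) * L := by
      rw [ha, Finset.sum_mul]
      refine Finset.sum_congr rfl fun i _ => ?_
      obtain ⟨q, hq⟩ := h i
      rw [hq, Nat.mul_div_cancel_left q (htpos i)]
      calc t i * q * n i = q * (n i * t i) := by ring
        _ = q * L := by rw [hnt]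
    exact this ▸ dvd_mul_left _ _
  obtain ⟨i₀, hi₀⟩ := hex
  haveI : NeZero (t i₀) := ⟨(htpos i₀).ne'⟩
  -- casting combinations to ZMod (t i₀)
  have hcast : ∀ b : Fin d → ℕ,
      ((∑ i, b i * n i : ℕ) : ZMod (t i₀)) = (b i₀ : ZMod (t i₀)) * (n i₀ : ZMod (t i₀)) := by
    intro b
    push_cast
    rw [Finset.sum_eq_single i₀]
    · intro j _ hj
      have : ((n j : ℕ) : ZMod (t i₀)) = 0 :=
        (ZMod.natCast_eq_zero_iff _ _).mpr (hdvdn i₀ j (Ne.symm hj))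
      rw [this, mul_zero]
    · intro h; exact absurd (Finset.mem_univ i₀) h
  have hFcast : ∀ F : Finset (Fin d), i₀ ∉ F →
      ((∑ i ∈ F, n i : ℕ) : ZMod (t i₀)) = 0 := by
    intro F hF
    push_cast
    refine Finset.sum_eq_zero fun j hj => ?_
    exact (ZMod.natCast_eq_zero_iff _ _).mpr
      (hdvdn i₀ j (fun h => hF (h ▸ hj)))
  have hunit : IsUnit ((n i₀ : ℕ) : ZMod (t i₀)) :=
    (ZMod.isUnit_iff_coprime _ _).mpr ((hcop' i₀).symm)
  have hane : ((a i₀ : ℕ) : ZMod (t i₀)) ≠ 0 := by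
    intro h
    exact hi₀ ((ZMod.natCast_eq_zero_iff _ _).mp h)
  -- adding a generator to a combination
  have hadd : ∀ b : Fin d → ℕ,
      (∑ i, (b i + if i = i₀ then 1 else 0) * n i) = (∑ i, b i * n i) + n i₀ := by
    intro b
    simp only [add_mul, Finset.sum_add_distrib, ite_mul, one_mul, zero_mul]
    rw [Finset.sum_ite_eq' Finset.univ i₀ n]
    simp
  -- key membership toggle
  have key : ∀ F : Finset (Fin d), i₀ ∉ F →
      (F ∈ sdc (genBy n) n m ↔ insert i₀ F ∈ sdc (genBy n) n m) := by
    intro F hF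
    constructor
    · rintro ⟨s, ⟨b, rfl⟩, hms⟩
      -- show b i₀ ≥ 1
      have hb0 : b i₀ ≠ 0 := by
        intro h0
        have hcm : ((m : ℕ) : ZMod (t i₀)) = (a i₀ : ZMod (t i₀)) * (n i₀ : ZMod (t i₀)) := by
          rw [ha]; exact hcast a
        have hcs : ((m : ℕ) : ZMod (t i₀)) = 0 := by
          rw [hms, Nat.cast_add, hFcast F hF, hcast b, h0]
          simp
        rw [hcs] at hcm
        exact hane ((hunit.mul_left_eq_zero).mp hcm.symm)
      have hb1 : 1 ≤ b i₀ := Nat.one_le_iff_ne_zero.mpr hb0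
      set b' : Fin d → ℕ := fun i => b i - if i = i₀ then 1 else 0 with hb'
      have hbb : ∀ i, b' i + (if i = i₀ then 1 else 0) = b i := by
        intro i
        by_cases h : i = i₀
        · subst h
          have hbe : b' i = b i - 1 := by simp [hb']
          rw [hbe, if_pos rfl]
          omega
        · simp [hb', h]
      refine ⟨∑ i, b' i * n i, ⟨b', rfl⟩, ?_⟩
      rw [Finset.sum_insert hF]
      have : (∑ i, b i * n i) = (∑ i, b' i * n i) + n i₀ := by
        rw [← hadd b']
        exact Finset.sum_congr rfl fun i _ => by rw [hbb i]
      rw [hms, this]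
      ring
    · rintro ⟨s, ⟨b, rfl⟩, hms⟩
      refine ⟨(∑ i, b i * n i) + n i₀, ⟨fun i => b i + if i = i₀ then 1 else 0, (hadd b).symm⟩, ?_⟩
      rw [hms, Finset.sum_insert hF]
      ring
  -- conclude by pairing F with F Δ {i₀}
  set g : Finset (Fin d) → Finset (Fin d) :=
    fun F => if i₀ ∈ F then F.erase i₀ else insert i₀ F with hgdef
  have hg_pos : ∀ F, i₀ ∈ F → g F = F.erase i₀ := fun F h => if_pos h
  have hg_neg : ∀ F, i₀ ∉ F → g F = insert i₀ F := fun F h => if_neg h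
  unfold eulerChar
  refine Finset.sum_ninvolution g ?_ ?_ (fun F => Finset.mem_univ _) ?_
  · intro F
    by_cases h : i₀ ∈ F
    · rw [hg_pos F h]
      have hF' : i₀ ∉ F.erase i₀ := Finset.notMem_erase _ _
      have hiff := key (F.erase i₀) hF'
      rw [Finset.insert_erase h] at hiff
      have hcard : F.card = (F.erase i₀).card + 1 := by
        have hpos : 0 < F.card := Finset.card_pos.mpr ⟨i₀, h⟩
        rw [Finset.card_erase_of_mem h]
        omega
      by_cases hm' : F ∈ sdc (genBy n) n m
      · rw [if_pos hm', if_pos (hiff.mpr hm'), hcard, pow_succ]; ring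
      · rw [if_neg hm', if_neg (fun hc => hm' (hiff.mp hc))]; ring
    · rw [hg_neg F h]
      have hiff := key F h
      have hcard : (insert i₀ F).card = F.card + 1 := Finset.card_insert_of_notMem h
      by_cases hm' : F ∈ sdc (genBy n) n m
      · rw [if_pos hm', if_pos (hiff.mp hm'), hcard, pow_succ]; ring
      · rw [if_neg hm', if_neg (fun hc => hm' (hiff.mpr hc))]; ring
  · intro F _
    by_cases h : i₀ ∈ F
    · rw [hg_pos F h]
      exact Finset.erase_ne_self.mpr h
    · rw [hg_neg F h]
      exact Finset.insert_ne_self.mpr h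
  · intro F
    by_cases h : i₀ ∈ F
    · rw [hg_pos F h, hg_neg _ (Finset.notMem_erase i₀ F), Finset.insert_erase h]
    · rw [hg_neg F h, hg_pos _ (Finset.mem_insert_self i₀ F), Finset.erase_insert h]
end

section
/- Fix a numerical semigroup S minimally generated by n₁,…,n_d, and let n = n₁ + ⋯ + n_d. For any m ∈ S, the squarefree divisor complex Δ_m equals 2^{[d]} \ {[d]} (the boundary of the full simplex) if and only if m − n is a pseudo-Frobenius number of S. -/
open scoped Classical

/-- `Δ_m` is the boundary of the full simplex iff `m - (n₁ + ⋯ + n_d)` is a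
pseudo-Frobenius number of `S`. -/
theorem sdc_boundary_iff_pseudoFrobenius {d : ℕ} (S : Set ℕ) (n : Fin d → ℕ)
    (hS : IsNumericalSemigroup S) (hmin : IsMinGen S n) (m : ℕ) (hm : m ∈ S) :
    sdc S n m = {F : Finset (Fin d) | F ≠ Finset.univ} ↔
      ((m : ℤ) - ∑ i, (n i : ℤ)) ∈ PF S := by
  obtain ⟨hgen, hinj, hirr⟩ := hmin
  obtain ⟨h0, hadd, hcof⟩ := hS
  constructor
  · intro h
    constructor
    · rintro ⟨y, hy, hyeq⟩
      have huniv : (Finset.univ : Finset (Fin d)) ∈ sdc S n m := by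
        refine ⟨y, hy, ?_⟩
        have : (m : ℤ) = ∑ i, (n i : ℤ) + (y : ℤ) := by linarith
        exact_mod_cast this
      rw [h] at huniv
      exact huniv rfl
    · intro s hs hs0
      have hs' : s ∈ genBy n := hgen ▸ hs
      obtain ⟨a, ha⟩ := hs'
      have : ∃ j, a j * n j ≠ 0 := by
        by_contra hc
        push_neg at hc
        exact hs0 (ha.trans (Finset.sum_eq_zero fun i _ => hc i))
      obtain ⟨j, hj⟩ := this
      have haj : a j ≠ 0 := fun h' => hj (by simp [h'])
      -- the face univ.erase j
      have hF : (Finset.univ.erase j : Finset (Fin d)) ∈ sdc S n m := by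
        rw [h]
        simp only [Set.mem_setOf_eq]
        intro he
        have : j ∈ (Finset.univ.erase j : Finset (Fin d)) := by
          rw [he]; exact Finset.mem_univ j
        exact (Finset.notMem_erase j _) this
      obtain ⟨t, ht, hmt⟩ := hF
      -- s' = s - n j, still in S
      set s' : ℕ := (a j - 1) * n j + ∑ i ∈ Finset.univ.erase j, a i * n i with hs'def
      have hsplit : s = n j + s' := by
        have h1 : s = a j * n j + ∑ i ∈ Finset.univ.erase j, a i * n i :=
          ha.trans (Finset.add_sum_erase Finset.univ (fun i => a i * n i)
            (Finset.mem_univ j)).symm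
        have hcancel : a j - 1 + 1 = a j := Nat.sub_add_cancel (Nat.one_le_iff_ne_zero.mpr haj)
        have h2 : a j * n j = n j + (a j - 1) * n j := by
          nth_rewrite 1 [← hcancel]; ring
        rw [h1, h2, hs'def]; ring
      have hs'S : s' ∈ S := by
        rw [hgen]
        refine ⟨fun i => if i = j then a j - 1 else a i, ?_⟩
        rw [hs'def, ← Finset.add_sum_erase _ (fun i => (if i = j then a j - 1 else a i) * n i)
          (Finset.mem_univ j)]
        simp only [if_pos rfl]
        congr 1
        exact Finset.sum_congr rfl fun i hi => by
          rw [if_neg (Finset.ne_of_mem_erase hi)]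
      refine ⟨t + s', hadd t ht s' hs'S, ?_⟩
      have hm' : (m : ℤ) = ∑ i ∈ Finset.univ.erase j, (n i : ℤ) + (t : ℤ) := by
        exact_mod_cast congrArg (Nat.cast : ℕ → ℤ) hmt
      have hsum : (∑ i, (n i : ℤ)) = (n j : ℤ) + ∑ i ∈ Finset.univ.erase j, (n i : ℤ) := by
        rw [← Finset.add_sum_erase _ _ (Finset.mem_univ j)]
      have hscast : (s : ℤ) = (n j : ℤ) + (s' : ℤ) := by exact_mod_cast hsplit
      push_cast
      linarith
  · rintro ⟨hnot, hpf⟩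
    ext F
    simp only [Set.mem_setOf_eq]
    constructor
    · rintro ⟨t, ht, hmt⟩ hF
      subst hF
      exact hnot ⟨t, ht, by
        have : (m : ℤ) = ∑ i, (n i : ℤ) + (t : ℤ) := by exact_mod_cast hmt
        linarith⟩
    · intro hF
      have hex : ∃ j, j ∉ F := by
        by_contra hc
        push_neg at hc
        exact hF (Finset.eq_univ_iff_forall.mpr hc)
      obtain ⟨j, hj⟩ := hex
      set s : ℕ := ∑ i ∈ Fᶜ, n i with hsdef
      have hsS : s ∈ S := by
        rw [hgen]
        refine ⟨fun i => if i ∈ Fᶜ then 1 else 0, ?_⟩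
        have hterm : ∀ i, (if i ∈ Fᶜ then 1 else 0) * n i = if i ∈ Fᶜ then n i else 0 := by
          intro i; split <;> simp
        rw [hsdef]
        rw [show (∑ i : Fin d, (fun i => if i ∈ Fᶜ then 1 else 0) i * n i)
            = ∑ i : Fin d, if i ∈ Fᶜ then n i else 0 from
          Finset.sum_congr rfl fun i _ => hterm i]
        rw [Finset.sum_ite_mem, Finset.univ_inter]
      have hs0 : s ≠ 0 := by
        intro h0'
        have hjc : j ∈ Fᶜ := Finset.mem_compl.mpr hj
        have := (Finset.sum_eq_zero_iff.mp h0') j hjc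
        exact (hirr j).1 this
      obtain ⟨y, hy, hyeq⟩ := hpf s hsS hs0
      refine ⟨y, hy, ?_⟩
      have hsum : (∑ i ∈ F, (n i : ℤ)) + ∑ i ∈ Fᶜ, (n i : ℤ) = ∑ i, (n i : ℤ) :=
        Finset.sum_add_sum_compl F _
      have hscast : (s : ℤ) = ∑ i ∈ Fᶜ, (n i : ℤ) := by
        rw [hsdef]; push_cast; ring
      have : (m : ℤ) = ∑ i ∈ F, (n i : ℤ) + (y : ℤ) := by linarith
      exact_mod_cast this
end

section
/- Let S = ⟨n₁, n₂, n₃⟩ be a numerical semigroup minimally generated by n₁, n₂, n₃. For each i ∈ {1,2,3}, with {i,j,k} = {1,2,3}, let m_i = min{ m ∈ ℕ_{>0} : n_i ∣ m and m ∈ ⟨n_j, n_k⟩ }. Then m ∈ S has disconnected squarefree divisor complex Δ_m (i.e., Δ_m has at least two vertices and can be partitioned into two nonempty subcomplexes with no face meeting both) if and only if m ∈ {m₁, m₂, m₃}. -/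
open scoped Classical

/-- A simplicial complex is disconnected if its vertices split into two nonempty parts with
no face meeting both. -/
def SDCDisconnected {d : ℕ} (Δ : Set (Finset (Fin d))) : Prop :=
  ∃ U : Set (Fin d), (∃ i ∈ U, ({i} : Finset (Fin d)) ∈ Δ) ∧
    (∃ i ∉ U, ({i} : Finset (Fin d)) ∈ Δ) ∧
    ∀ F ∈ Δ, (∀ x ∈ F, x ∈ U) ∨ (∀ x ∈ F, x ∉ U)

/-! Over the semigroup generated by `n`, the faces of `Δ_m` are the subsets of supports of
factorizations of `m`. On three vertices, a disconnected complex is one with an isolated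
vertex `i` and some other vertex. If `i` is isolated, every factorization of `m` using `n i`
uses nothing else, so `n i ∣ m`, while the other vertex gives a factorization of `m` avoiding
`n i`. Finally, for `n i ∣ m`, a factorization using `n i` and some `n l` exists iff a smaller
positive multiple `x` of `n i` factors without `n i`: subtract the `n i`-part, or conversely
add `m - x` as a multiple of `n i`. So `i` is isolated exactly when `m` is the least such
multiple, the paper's `m_i`. -/

open Finset

def IsIsolatedVertex {d : ℕ} (Δ : Set (Finset (Fin d))) (i : Fin d) : Prop :=
  {i} ∈ Δ ∧ ∀ l ≠ i, ({i, l} : Finset (Fin d)) ∉ Δ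

section Complex

variable {d : ℕ} {Δ : Set (Finset (Fin d))}

theorem SDCDisconnected.of_isIsolatedVertex (hΔ : IsLowerSet Δ) {i l : Fin d}
    (hi : IsIsolatedVertex Δ i) (hli : l ≠ i) (hl : {l} ∈ Δ) : SDCDisconnected Δ := by
  refine ⟨{i}, ⟨i, rfl, hi.1⟩, ⟨l, hli, hl⟩, fun F hF => ?_⟩
  by_cases hiF : i ∈ F
  · refine .inl fun x hx => by_contra fun hxi => hi.2 x hxi (hΔ ?_ hF)
    exact insert_subset_iff.2 ⟨hiF, singleton_subset_iff.2 hx⟩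
  · exact .inr fun x hx hxi => hiF (hxi ▸ hx)

theorem isIsolatedVertex_of_separated (hΔ : IsLowerSet Δ) {U : Set (Fin d)}
    (hsep : ∀ F ∈ Δ, (∀ x ∈ F, x ∈ U) ∨ (∀ x ∈ F, x ∉ U)) {i : Fin d} (hi : {i} ∈ Δ)
    (hiU : i ∈ U) (huniq : ∀ v ∈ U, {v} ∈ Δ → v = i) : IsIsolatedVertex Δ i := by
  refine ⟨hi, fun l hli hil => hli (huniq l ?_ (hΔ (by simp) hil))⟩
  rcases hsep _ hil with hU | hU
  · exact hU l (by simp)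
  · exact absurd hiU (hU i (by simp))

theorem SDCDisconnected.exists_isIsolatedVertex {Δ : Set (Finset (Fin 3))} (hΔ : IsLowerSet Δ)
    (h : SDCDisconnected Δ) : ∃ i, IsIsolatedVertex Δ i ∧ ∃ l ≠ i, {l} ∈ Δ := by
  obtain ⟨U, ⟨i₀, hi₀U, hi₀⟩, ⟨i₁, hi₁U, hi₁⟩, hsep⟩ := h
  have hi₀₁ : i₀ ≠ i₁ := ne_of_mem_of_not_mem hi₀U hi₁U
  by_cases h₀ : ∀ v ∈ U, {v} ∈ Δ → v = i₀
  · exact ⟨i₀, isIsolatedVertex_of_separated hΔ hsep hi₀ hi₀U h₀, i₁, hi₀₁.symm, hi₁⟩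
  push Not at h₀
  obtain ⟨v, hvU, -, hvi₀⟩ := h₀
  have hsepCompl : ∀ F ∈ Δ, (∀ x ∈ F, x ∈ Uᶜ) ∨ (∀ x ∈ F, x ∉ Uᶜ) := fun F hF =>
    (hsep F hF).symm.imp id fun hU x hx hxU => hxU (hU x hx)
  refine ⟨i₁, isIsolatedVertex_of_separated hΔ hsepCompl hi₁ hi₁U fun w hwU _ => ?_, i₀, hi₀₁, hi₀⟩
  by_contra hwi₁
  have pigeonhole : ∀ a b c e : Fin 3, a ≠ b → a ≠ c → a ≠ e → b ≠ c → b ≠ e → c ≠ e → False := by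
    omega
  exact pigeonhole i₀ v i₁ w hvi₀.symm hi₀₁ (ne_of_mem_of_not_mem hi₀U hwU)
    (ne_of_mem_of_not_mem hvU hi₁U) (ne_of_mem_of_not_mem hvU hwU) (Ne.symm hwi₁)

end Complex

theorem sum_update_mul {d : ℕ} (a n : Fin d → ℕ) (i : Fin d) (c : ℕ) :
    ∑ t, Function.update a i c t * n t = c * n i + ∑ t, Function.update a i 0 t * n t := by
  rw [← add_sum_erase _ _ (mem_univ i), ← add_sum_erase _ _ (mem_univ i)]
  simp only [Function.update_self, zero_mul, zero_add]
  exact congrArg _ (sum_congr rfl fun t ht => by rw [Function.update_of_ne (ne_of_mem_erase ht),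
    Function.update_of_ne (ne_of_mem_erase ht)])

theorem sum_mul_eq_add_sum_update {d : ℕ} (a n : Fin d → ℕ) (i : Fin d) :
    ∑ t, a t * n t = a i * n i + ∑ t, Function.update a i 0 t * n t := by
  conv_lhs => rw [← Function.update_eq_self i a]
  exact sum_update_mul a n i (a i)

section Factorizations

variable {d : ℕ} {n : Fin d → ℕ} {m : ℕ}

theorem mem_sdc_genBy_iff {F : Finset (Fin d)} :
    F ∈ sdc (genBy n) n m ↔ ∃ a : Fin d → ℕ, m = ∑ t, a t * n t ∧ ∀ t ∈ F, 1 ≤ a t := by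
  have hF : ∑ t ∈ F, n t = ∑ t, (if t ∈ F then 1 else 0) * n t := by
    simp [ite_mul]
  constructor
  · rintro ⟨_, ⟨b, rfl⟩, rfl⟩
    refine ⟨fun t => (if t ∈ F then 1 else 0) + b t, ?_, fun t ht => by simp [ht]⟩
    simp only [hF, add_mul, sum_add_distrib]
  · rintro ⟨a, rfl, ha⟩
    refine ⟨_, ⟨fun t => a t - if t ∈ F then 1 else 0, rfl⟩, ?_⟩
    rw [hF, ← sum_add_distrib]
    refine sum_congr rfl fun t _ => ?_
    dsimp only
    rw [← add_mul]
    split_ifs with ht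
    · rw [Nat.add_sub_cancel' (ha t ht)]
    · rw [zero_add, Nat.sub_zero]

theorem isLowerSet_sdc_genBy : IsLowerSet (sdc (genBy n) n m) :=
  fun _ _ hGF hF => by
    obtain ⟨a, ha, hFa⟩ := mem_sdc_genBy_iff.1 hF
    exact mem_sdc_genBy_iff.2 ⟨a, ha, fun t ht => hFa t (hGF ht)⟩

theorem apply_eq_zero_of_insert_notMem_sdc {a : Fin d → ℕ} {F : Finset (Fin d)} {i : Fin d}
    (hm : m = ∑ t, a t * n t) (hF : ∀ t ∈ F, 1 ≤ a t) (hi : insert i F ∉ sdc (genBy n) n m) :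
    a i = 0 := by
  by_contra h
  exact hi (mem_sdc_genBy_iff.2 ⟨a, hm, forall_mem_insert _ _ _ |>.2 ⟨by omega, hF⟩⟩)

end Factorizations

-- The paper's `m_i` is the least element of `multiplesOmitting n i`.
def multiplesOmitting {d : ℕ} (n : Fin d → ℕ) (i : Fin d) : Set ℕ :=
  {x | 0 < x ∧ n i ∣ x ∧ ∃ a : Fin d → ℕ, a i = 0 ∧ x = ∑ l, a l * n l}

section MultiplesOmitting

variable {d : ℕ} {n : Fin d → ℕ} {m : ℕ} {i : Fin d}

theorem multiplesOmitting_nonempty (hn : ∀ t, 0 < n t) {j : Fin d} (hji : j ≠ i) :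
    (multiplesOmitting n i).Nonempty := by
  refine ⟨n i * n j, Nat.mul_pos (hn i) (hn j), dvd_mul_right _ _, Function.update 0 j (n i),
    Function.update_of_ne hji.symm _ _, ?_⟩
  simp [sum_update_mul]

theorem exists_pair_mem_sdc_genBy_iff (hn : ∀ t, 0 < n t) (hdvd : n i ∣ m) :
    (∃ l ≠ i, ({i, l} : Finset (Fin d)) ∈ sdc (genBy n) n m) ↔
      ∃ x ∈ multiplesOmitting n i, x < m := by
  constructor
  · rintro ⟨l, hli, hil⟩
    obtain ⟨a, rfl, ha⟩ := mem_sdc_genBy_iff.1 hil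
    have hai : 1 ≤ a i := ha i (by simp)
    have hal : 1 ≤ a l := ha l (by simp)
    rw [sum_mul_eq_add_sum_update] at hdvd ⊢
    set x := ∑ t, Function.update a i 0 t * n t
    have hx : a l * n l ≤ x := by
      simpa [Function.update_of_ne hli] using
        single_le_sum (f := fun t => Function.update a i 0 t * n t) (by simp) (mem_univ l)
    refine ⟨x, ⟨?_, (Nat.dvd_add_right (dvd_mul_left _ _)).1 hdvd, _, by simp, rfl⟩, ?_⟩
    · nlinarith [hn l]
    · nlinarith [hn i]
  · rintro ⟨x, ⟨hx0, ⟨c, rfl⟩, e, hei, hxe⟩, hlt⟩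
    obtain ⟨C, rfl⟩ := hdvd
    have hcC : c < C := Nat.lt_of_mul_lt_mul_left hlt
    obtain ⟨l, -, hel⟩ := exists_ne_zero_of_sum_ne_zero (hxe ▸ hx0.ne')
    have hli : l ≠ i := by rintro rfl; simp [hei] at hel
    refine ⟨l, hli, mem_sdc_genBy_iff.2 ⟨Function.update e i (C - c), ?_, ?_⟩⟩
    · rw [sum_update_mul, Function.update_eq_self_iff.2 hei.symm, ← hxe]
      zify [hcC.le]
      ring
    · simp only [mem_insert, mem_singleton, forall_eq_or_imp, forall_eq, Function.update_self,
        Function.update_of_ne hli]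
      exact ⟨by omega, Nat.one_le_iff_ne_zero.2 (left_ne_zero_of_mul hel)⟩

theorem isIsolatedVertex_sdc_genBy_iff_isLeast (hn : ∀ t, 0 < n t) :
    (IsIsolatedVertex (sdc (genBy n) n m) i ∧ ∃ l ≠ i, {l} ∈ sdc (genBy n) n m) ↔
      IsLeast (multiplesOmitting n i) m := by
  constructor
  · rintro ⟨⟨hi, hiso⟩, l, hli, hl⟩
    obtain ⟨a, ha, hai⟩ := mem_sdc_genBy_iff.1 hi
    have ha_ne : ∀ t ≠ i, a t = 0 := fun t hti =>
      apply_eq_zero_of_insert_notMem_sdc ha hai (by rw [pair_comm]; exact hiso t hti)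
    have hdvd : n i ∣ m := ⟨a i, by
      rw [ha, sum_eq_single_of_mem i (mem_univ i) fun t _ hti => by rw [ha_ne t hti, zero_mul],
        mul_comm]⟩
    obtain ⟨b, hb, hbl⟩ := mem_sdc_genBy_iff.1 hl
    have hbi : b i = 0 := apply_eq_zero_of_insert_notMem_sdc hb hbl (hiso l hli)
    have hm0 : 0 < m := by
      rw [hb]
      exact (Nat.mul_pos (hbl l (mem_singleton_self l)) (hn l)).trans_le
        (single_le_sum (f := fun t => b t * n t) (by simp) (mem_univ l))
    refine ⟨⟨hm0, hdvd, b, hbi, hb⟩, fun x hx => ?_⟩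
    by_contra! hxm
    obtain ⟨l', hl'i, hil'⟩ := (exists_pair_mem_sdc_genBy_iff hn hdvd).2 ⟨x, hx, hxm⟩
    exact hiso l' hl'i hil'
  · rintro ⟨⟨hm0, ⟨C, rfl⟩, a, hai, ha⟩, hleast⟩
    obtain ⟨l, -, hal⟩ := exists_ne_zero_of_sum_ne_zero (ha ▸ hm0.ne')
    have hli : l ≠ i := by rintro rfl; simp [hai] at hal
    refine ⟨⟨mem_sdc_genBy_iff.2 ⟨Function.update 0 i C, ?_, ?_⟩, fun l' hl'i hil' => ?_⟩,
      l, hli, mem_sdc_genBy_iff.2 ⟨a, ha, ?_⟩⟩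
    · rw [sum_update_mul]
      simp [mul_comm]
    · simp only [mem_singleton, forall_eq, Function.update_self]
      exact Nat.pos_of_mul_pos_left hm0
    · obtain ⟨x, hx, hxm⟩ :=
        (exists_pair_mem_sdc_genBy_iff hn (dvd_mul_right _ _)).1 ⟨l', hl'i, hil'⟩
      exact (hleast hx).not_gt hxm
    · simpa [Nat.one_le_iff_ne_zero] using left_ne_zero_of_mul hal

end MultiplesOmitting

theorem sdc_disconnected_iff_general {S : Set ℕ} {n : Fin 3 → ℕ}
    (hmin : IsMinGen S n) (m : ℕ) :
    SDCDisconnected (sdc S n m) ↔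
      ∃ i : Fin 3, m = sInf {x : ℕ | 0 < x ∧ n i ∣ x ∧
        ∃ a : Fin 3 → ℕ, a i = 0 ∧ x = ∑ l, a l * n l} := by
  obtain ⟨rfl, -, hirr⟩ := hmin
  have hn : ∀ t, 0 < n t := fun t => Nat.pos_of_ne_zero (hirr t).1
  change _ ↔ ∃ i, m = sInf (multiplesOmitting n i)
  have hleast (i : Fin 3) : m = sInf (multiplesOmitting n i) ↔ IsLeast (multiplesOmitting n i) m :=
    ⟨fun h => h ▸ isLeast_csInf (multiplesOmitting_nonempty hn (j := i + 1) (by omega)),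
      fun h => h.csInf_eq.symm⟩
  simp only [hleast, ← isIsolatedVertex_sdc_genBy_iff_isLeast hn]
  exact ⟨SDCDisconnected.exists_isIsolatedVertex isLowerSet_sdc_genBy,
    fun ⟨_, hi, _, hli, hl⟩ => .of_isIsolatedVertex isLowerSet_sdc_genBy hi hli hl⟩

/-- For a 3-generated numerical semigroup, `Δ_m` is disconnected iff `m` is one of the
three elements `mᵢ = min{m > 0 : nᵢ ∣ m and m ∈ ⟨n_j, n_k⟩}`. -/
theorem sdc_disconnected_iff {S : Set ℕ} {n : Fin 3 → ℕ}
    (hS : IsNumericalSemigroup S) (hmin : IsMinGen S n) (m : ℕ) (hm : m ∈ S) :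
    SDCDisconnected (sdc S n m) ↔
      ∃ i : Fin 3, m = sInf {x : ℕ | 0 < x ∧ n i ∣ x ∧
        ∃ a : Fin 3 → ℕ, a i = 0 ∧ x = ∑ l, a l * n l} :=
  sdc_disconnected_iff_general hmin m
end

section
/- Let S = ⟨n₁, n₂, n₃⟩ be a numerical semigroup minimally generated by n₁, n₂, n₃, and define m₁, m₂, m₃ by m_i = min{ m ∈ ℕ_{>0} : n_i ∣ m and m ∈ ⟨n_j, n_k⟩ } where {i,j,k} = {1,2,3}. For m ∈ S, the Euler characteristic χ(Δ_m) is nonzero if and only if m ∈ {0, m₁, m₂, m₃} ∪ (n₁+n₂+n₃ + PF(S)), where PF(S) is the set of pseudo-Frobenius numbers of S. -/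
open scoped Classical

section AuxSdc

variable {S : Set ℕ} {n : Fin 3 → ℕ}

lemma sum3 {M : Type*} [AddCommMonoid M] {i j k : Fin 3} (hij : i ≠ j) (hik : i ≠ k)
    (hjk : j ≠ k) (f : Fin 3 → M) : ∑ l, f l = f i + f j + f k := by
  have huniv : ({i, j, k} : Finset (Fin 3)) = Finset.univ := by
    apply Finset.eq_univ_of_card
    rw [Finset.card_insert_of_notMem (by simp [hij, hik]),
      Finset.card_insert_of_notMem (by simp [hjk]), Finset.card_singleton]
    simp
  rw [← huniv, Finset.sum_insert (by simp [hij, hik]), Finset.sum_insert (by simp [hjk]),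
    Finset.sum_singleton, add_assoc]

lemma memS3 (hmin : IsMinGen S n) {i j k : Fin 3} (hij : i ≠ j) (hik : i ≠ k) (hjk : j ≠ k)
    (x : ℕ) : x ∈ S ↔ ∃ u v w : ℕ, x = u * n i + v * n j + w * n k := by
  rw [hmin.1]
  constructor
  · rintro ⟨a, rfl⟩
    exact ⟨a i, a j, a k, by rw [sum3 hij hik hjk]⟩
  · rintro ⟨u, v, w, rfl⟩
    refine ⟨fun l => if l = i then u else if l = j then v else w, ?_⟩
    rw [sum3 hij hik hjk (f := fun l => (if l = i then u else if l = j then v else w) * n l)]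
    simp [hij, hik, hjk, hij.symm, hik.symm, hjk.symm]

lemma setChar3 {i j k : Fin 3} (hij : i ≠ j) (hik : i ≠ k) (hjk : j ≠ k) (x : ℕ) :
    x ∈ {x : ℕ | 0 < x ∧ n i ∣ x ∧ ∃ a : Fin 3 → ℕ, a i = 0 ∧ x = ∑ l, a l * n l} ↔
      (0 < x ∧ n i ∣ x ∧ ∃ v w : ℕ, x = v * n j + w * n k) := by
  simp only [Set.mem_setOf_eq]
  refine and_congr_right fun _ => and_congr_right fun _ => ⟨?_, ?_⟩
  · rintro ⟨a, hai, rfl⟩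
    exact ⟨a j, a k, by rw [sum3 hij hik hjk, hai, zero_mul, zero_add]⟩
  · rintro ⟨v, w, rfl⟩
    refine ⟨fun l => if l = i then 0 else if l = j then v else w, by simp, ?_⟩
    rw [sum3 hij hik hjk (f := fun l => (if l = i then 0 else if l = j then v else w) * n l)]
    simp [hij, hik, hjk, hij.symm, hik.symm, hjk.symm]

lemma gen_mem (hmin : IsMinGen S n) (i : Fin 3) : n i ∈ S := by
  rw [hmin.1]
  refine ⟨fun l => if l = i then 1 else 0, ?_⟩
  simp [ite_mul]


lemma mem_sdc_iff_s14 {m : ℕ} (F : Finset (Fin 3)) : F ∈ sdc S n m ↔ ∃ s ∈ S, m = ∑ i ∈ F, n i + s :=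
  Iff.rfl

lemma chiVal {m : ℕ} (hm : m ∈ S) : eulerChar S n m =
    1 + (if ∃ s ∈ S, m = n 0 + s then (-1 : ℤ) else 0)
      + (if ∃ s ∈ S, m = n 1 + s then (-1 : ℤ) else 0)
      + (if ∃ s ∈ S, m = n 2 + s then (-1 : ℤ) else 0)
      + (if ∃ s ∈ S, m = n 0 + n 1 + s then (1 : ℤ) else 0)
      + (if ∃ s ∈ S, m = n 0 + n 2 + s then (1 : ℤ) else 0)
      + (if ∃ s ∈ S, m = n 1 + n 2 + s then (1 : ℤ) else 0)
      + (if ∃ s ∈ S, m = n 0 + n 1 + n 2 + s then (-1 : ℤ) else 0) := by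
  have hemp : (∅ : Finset (Fin 3)) ∈ sdc S n m := ⟨m, hm, by simp⟩
  have e0 : ∑ i ∈ ({0} : Finset (Fin 3)), n i = n 0 := by simp
  have e1 : ∑ i ∈ ({1} : Finset (Fin 3)), n i = n 1 := by simp
  have e2 : ∑ i ∈ ({2} : Finset (Fin 3)), n i = n 2 := by simp
  have e01 : ∑ i ∈ ({0, 1} : Finset (Fin 3)), n i = n 0 + n 1 := Finset.sum_pair (by decide)
  have e02 : ∑ i ∈ ({0, 2} : Finset (Fin 3)), n i = n 0 + n 2 := Finset.sum_pair (by decide)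
  have e12 : ∑ i ∈ ({1, 2} : Finset (Fin 3)), n i = n 1 + n 2 := Finset.sum_pair (by decide)
  have e012 : ∑ i ∈ ({0, 1, 2} : Finset (Fin 3)), n i = n 0 + n 1 + n 2 := by
    rw [Finset.sum_insert (by decide), Finset.sum_pair (by decide)]; ring
  rw [eulerChar,
    show (Finset.univ : Finset (Finset (Fin 3))) =
      {∅, {0}, {1}, {2}, {0,1}, {0,2}, {1,2}, {0,1,2}} from by decide]
  repeat rw [Finset.sum_insert (by decide)]
  rw [Finset.sum_singleton, if_pos hemp]
  simp only [mem_sdc_iff_s14, e0, e1, e2, e01, e02, e12, e012]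
  rw [show ({0,2} : Finset (Fin 3)).card = 2 from by decide,
    show ({1,2} : Finset (Fin 3)).card = 2 from by decide,
    show ({0,1,2} : Finset (Fin 3)).card = 3 from by decide]
  norm_num
  ring


lemma key3 (hmin : IsMinGen S n) {i j k : Fin 3}
    (hij : i ≠ j) (hik : i ≠ k) (hjk : j ≠ k) {m : ℕ}
    (hVi : ∃ s ∈ S, m = n i + s)
    (hEij : ¬∃ s ∈ S, m = n i + n j + s)
    (hEik : ¬∃ s ∈ S, m = n i + n k + s)
    (hdec : ∃ v w : ℕ, m = v * n j + w * n k) :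
    m = sInf {x : ℕ | 0 < x ∧ n i ∣ x ∧ ∃ a : Fin 3 → ℕ, a i = 0 ∧ x = ∑ l, a l * n l} := by
  have hni : n i ≠ 0 := (hmin.2.2 i).1
  obtain ⟨s, hs, hms⟩ := hVi
  obtain ⟨u, v, w, rfl⟩ := (memS3 hmin hij hik hjk s).1 hs
  have hv : v = 0 := by
    by_contra hv
    obtain ⟨v', rfl⟩ : ∃ v', v = v' + 1 := ⟨v - 1, by omega⟩
    exact hEij ⟨u * n i + v' * n j + w * n k,
      (memS3 hmin hij hik hjk _).2 ⟨u, v', w, rfl⟩, by rw [hms]; ring⟩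
  have hw : w = 0 := by
    by_contra hw
    obtain ⟨w', rfl⟩ : ∃ w', w = w' + 1 := ⟨w - 1, by omega⟩
    exact hEik ⟨u * n i + v * n j + w' * n k,
      (memS3 hmin hij hik hjk _).2 ⟨u, v, w', rfl⟩, by rw [hms]; ring⟩
  subst hv hw
  have hmA : m = (u + 1) * n i := by rw [hms]; ring
  set X := {x : ℕ | 0 < x ∧ n i ∣ x ∧ ∃ a : Fin 3 → ℕ, a i = 0 ∧ x = ∑ l, a l * n l}
  have hmX : m ∈ X := (setChar3 hij hik hjk m).2
    ⟨by rw [hmA]; positivity, ⟨u + 1, by rw [hmA, mul_comm]⟩, hdec⟩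
  have hle : sInf X ≤ m := Nat.sInf_le hmX
  obtain ⟨hpos', hdvd', v', w', hdec'⟩ := (setChar3 hij hik hjk _).1 (Nat.sInf_mem ⟨m, hmX⟩)
  obtain ⟨B, hB⟩ := hdvd'
  have hP : 0 < v' * n j + w' * n k := hdec' ▸ hpos'
  have h2 : B * n i = v' * n j + w' * n k := by rw [mul_comm, ← hB, hdec']
  by_contra hne
  have hlt : sInf X < m := lt_of_le_of_ne hle fun h => hne h.symm
  have hBu : B < u + 1 := by
    refine Nat.lt_of_mul_lt_mul_left (a := n i) ?_
    rw [mul_comm (n i) B, h2, ← hdec', mul_comm, ← hmA]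
    exact hlt
  clear hle hlt hpos' hdec' hB hne hmX hs hms
  obtain ⟨D, hD⟩ : ∃ D, u + 1 = B + (D + 1) := ⟨u - B, by clear * - hBu; omega⟩
  have hmeq : m = v' * n j + w' * n k + (D + 1) * n i := by
    calc m = (B + (D + 1)) * n i := by rw [hmA, hD]
    _ = B * n i + (D + 1) * n i := by ring
    _ = v' * n j + w' * n k + (D + 1) * n i := by rw [h2]
  rcases Nat.eq_zero_or_pos v' with hv' | hv'
  · subst hv'
    have hw' : 0 < w' := by
      rcases Nat.eq_zero_or_pos w' with rfl | h
      · simp at hP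
      · exact h
    obtain ⟨w'', rfl⟩ : ∃ w'', w' = w'' + 1 := ⟨w' - 1, by clear * - hw'; omega⟩
    exact hEik ⟨D * n i + 0 * n j + w'' * n k,
      (memS3 hmin hij hik hjk _).2 ⟨D, 0, w'', rfl⟩, by rw [hmeq]; ring⟩
  · obtain ⟨v'', rfl⟩ : ∃ v'', v' = v'' + 1 := ⟨v' - 1, by clear * - hv'; omega⟩
    exact hEij ⟨D * n i + v'' * n j + w' * n k,
      (memS3 hmin hij hik hjk _).2 ⟨D, v'', w', rfl⟩, by rw [hmeq]; ring⟩


lemma setNE3 (hmin : IsMinGen S n) {i j k : Fin 3} (hij : i ≠ j) (hik : i ≠ k) (hjk : j ≠ k) :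
    Set.Nonempty {x : ℕ | 0 < x ∧ n i ∣ x ∧ ∃ a : Fin 3 → ℕ, a i = 0 ∧ x = ∑ l, a l * n l} := by
  have hni : n i ≠ 0 := (hmin.2.2 i).1
  have hnj : n j ≠ 0 := (hmin.2.2 j).1
  exact ⟨n i * n j, (setChar3 hij hik hjk _).2
    ⟨by positivity, ⟨n j, rfl⟩, ⟨n i, 0, by ring⟩⟩⟩

lemma noEdge3 (hmin : IsMinGen S n) {i j k : Fin 3}
    (hij : i ≠ j) (hik : i ≠ k) (hjk : j ≠ k) {m : ℕ}
    (hmi : m = sInf {x : ℕ | 0 < x ∧ n i ∣ x ∧ ∃ a : Fin 3 → ℕ, a i = 0 ∧ x = ∑ l, a l * n l}) :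
    ¬∃ s ∈ S, m = n i + n j + s := by
  have hni : n i ≠ 0 := (hmin.2.2 i).1
  have hnj : n j ≠ 0 := (hmin.2.2 j).1
  set X := {x : ℕ | 0 < x ∧ n i ∣ x ∧ ∃ a : Fin 3 → ℕ, a i = 0 ∧ x = ∑ l, a l * n l}
  rintro ⟨s, hs, hms⟩
  obtain ⟨u, v, w, rfl⟩ := (memS3 hmin hij hik hjk s).1 hs
  obtain ⟨hpos', hdvd', v', w', hdec'⟩ :=
    (setChar3 hij hik hjk _).1 (Nat.sInf_mem (setNE3 hmin hij hik hjk))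
  obtain ⟨B, hB⟩ := hdvd'
  -- m = (u+1) n i + (v+1) n j + w n k  and  m = n i * B
  have hmB : n i * B = (u + 1) * n i + ((v + 1) * n j + w * n k) := by
    rw [← hB, ← hmi, hms]; ring
  have hQ : 0 < (v + 1) * n j + w * n k := by positivity
  have hBu : u + 1 < B := by
    refine Nat.lt_of_mul_lt_mul_left (a := n i) ?_
    rw [hmB, mul_comm (n i) (u + 1)]
    clear * - hQ
    omega
  obtain ⟨D, hD⟩ : ∃ D, B = (u + 1) + (D + 1) := ⟨B - u - 2, by clear * - hBu; omega⟩
  have hx' : (D + 1) * n i = (v + 1) * n j + w * n k := by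
    have h3 : n i * B = (u + 1) * n i + (D + 1) * n i := by rw [hD]; ring
    clear * - h3 hmB
    omega
  have hx'X : (D + 1) * n i ∈ X := (setChar3 hij hik hjk _).2
    ⟨by positivity, ⟨D + 1, mul_comm _ _⟩, ⟨v + 1, w, hx'⟩⟩
  have hlt : sInf X < sInf X := by
    calc sInf X ≤ (D + 1) * n i := Nat.sInf_le hx'X
    _ = (v + 1) * n j + w * n k := hx'
    _ < n i * B := by rw [hmB]; exact Nat.lt_add_of_pos_left (by positivity)
    _ = sInf X := hB.symm
  exact lt_irrefl _ hlt


lemma infV3 (hmin : IsMinGen S n) {i j k : Fin 3}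
    (hij : i ≠ j) (hik : i ≠ k) (hjk : j ≠ k) {m : ℕ}
    (hmi : m = sInf {x : ℕ | 0 < x ∧ n i ∣ x ∧ ∃ a : Fin 3 → ℕ, a i = 0 ∧ x = ∑ l, a l * n l}) :
    (∃ s ∈ S, m = n i + s) ∧ ((∃ s ∈ S, m = n j + s) ∨ (∃ s ∈ S, m = n k + s)) := by
  obtain ⟨hpos', hdvd', v', w', hdec'⟩ :=
    (setChar3 hij hik hjk _).1 (Nat.sInf_mem (setNE3 hmin hij hik hjk))
  obtain ⟨B, hB⟩ := hdvd'
  rw [← hmi] at hpos' hdec' hB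
  clear hmi
  have hB0 : 0 < B := by
    rcases Nat.eq_zero_or_pos B with rfl | h
    · rw [mul_zero] at hB; omega
    · exact h
  obtain ⟨B', rfl⟩ : ∃ B', B = B' + 1 := ⟨B - 1, by omega⟩
  constructor
  · exact ⟨B' * n i + 0 * n j + 0 * n k,
      (memS3 hmin hij hik hjk _).2 ⟨B', 0, 0, rfl⟩, by rw [hB]; ring⟩
  · rcases Nat.eq_zero_or_pos v' with rfl | hv'
    · have hw' : 0 < w' := by
        rcases Nat.eq_zero_or_pos w' with rfl | h
        · rw [hdec'] at hpos'; simp at hpos'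
        · exact h
      obtain ⟨w'', rfl⟩ : ∃ w'', w' = w'' + 1 := ⟨w' - 1, by omega⟩
      exact Or.inr ⟨0 * n i + 0 * n j + w'' * n k,
        (memS3 hmin hij hik hjk _).2 ⟨0, 0, w'', rfl⟩, by rw [hdec']; ring⟩
    · obtain ⟨v'', rfl⟩ : ∃ v'', v' = v'' + 1 := ⟨v' - 1, by omega⟩
      exact Or.inl ⟨0 * n i + v'' * n j + w' * n k,
        (memS3 hmin hij hik hjk _).2 ⟨0, v'', w', rfl⟩, by rw [hdec']; ring⟩

lemma Esymm {i j : Fin 3} {m : ℕ} (h : ∃ s ∈ S, m = n i + n j + s) :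
    ∃ s ∈ S, m = n j + n i + s := by
  obtain ⟨s, hs, hh⟩ := h
  exact ⟨s, hs, hh.trans (by ring)⟩

lemma edgeVl (hS : IsNumericalSemigroup S) (hmin : IsMinGen S n) {i j : Fin 3} {m : ℕ}
    (h : ∃ s ∈ S, m = n i + n j + s) : ∃ s ∈ S, m = n i + s := by
  obtain ⟨s, hs, hh⟩ := h
  exact ⟨n j + s, hS.2.1 _ (gen_mem hmin j) _ hs, hh.trans (by ring)⟩

lemma edgeVr (hS : IsNumericalSemigroup S) (hmin : IsMinGen S n) {i j : Fin 3} {m : ℕ}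
    (h : ∃ s ∈ S, m = n i + n j + s) : ∃ s ∈ S, m = n j + s := by
  obtain ⟨s, hs, hh⟩ := h
  exact ⟨n i + s, hS.2.1 _ (gen_mem hmin i) _ hs, hh.trans (by ring)⟩

lemma triE01 (hS : IsNumericalSemigroup S) (hmin : IsMinGen S n) {m : ℕ}
    (h : ∃ s ∈ S, m = n 0 + n 1 + n 2 + s) : ∃ s ∈ S, m = n 0 + n 1 + s := by
  obtain ⟨s, hs, hh⟩ := h
  exact ⟨n 2 + s, hS.2.1 _ (gen_mem hmin 2) _ hs, hh.trans (by ring)⟩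

lemma triE02 (hS : IsNumericalSemigroup S) (hmin : IsMinGen S n) {m : ℕ}
    (h : ∃ s ∈ S, m = n 0 + n 1 + n 2 + s) : ∃ s ∈ S, m = n 0 + n 2 + s := by
  obtain ⟨s, hs, hh⟩ := h
  exact ⟨n 1 + s, hS.2.1 _ (gen_mem hmin 1) _ hs, hh.trans (by ring)⟩

lemma triE12 (hS : IsNumericalSemigroup S) (hmin : IsMinGen S n) {m : ℕ}
    (h : ∃ s ∈ S, m = n 0 + n 1 + n 2 + s) : ∃ s ∈ S, m = n 1 + n 2 + s := by
  obtain ⟨s, hs, hh⟩ := h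
  exact ⟨n 0 + s, hS.2.1 _ (gen_mem hmin 0) _ hs, hh.trans (by ring)⟩

end AuxSdc

/-- For a 3-generated numerical semigroup, `χ(Δ_m) ≠ 0` iff `m ∈ {0, m₁, m₂, m₃} ∪
(n₁+n₂+n₃ + PF(S))`. -/
theorem eulerChar_ne_zero_iff_threeGen {S : Set ℕ} {n : Fin 3 → ℕ}
    (hS : IsNumericalSemigroup S) (hmin : IsMinGen S n) (m : ℕ) (hm : m ∈ S) :
    eulerChar S n m ≠ 0 ↔
      (m = 0 ∨
        (∃ i : Fin 3, m = sInf {x : ℕ | 0 < x ∧ n i ∣ x ∧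
          ∃ a : Fin 3 → ℕ, a i = 0 ∧ x = ∑ l, a l * n l}) ∨
        ∃ x ∈ PF S, (m : ℤ) = (∑ i, (n i : ℤ)) + x) := by

  have hn0 : n 0 ≠ 0 := (hmin.2.2 0).1
  have hn1 : n 1 ≠ 0 := (hmin.2.2 1).1
  have hn2 : n 2 ≠ 0 := (hmin.2.2 2).1
  have d01 : (0 : Fin 3) ≠ 1 := by decide
  have d02 : (0 : Fin 3) ≠ 2 := by decide
  have d12 : (1 : Fin 3) ≠ 2 := by decide
  have d10 : (1 : Fin 3) ≠ 0 := by decide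
  have d20 : (2 : Fin 3) ≠ 0 := by decide
  have d21 : (2 : Fin 3) ≠ 1 := by decide
  constructor
  · intro hchi
    rw [chiVal hm] at hchi
    by_cases hT : ∃ s ∈ S, m = n 0 + n 1 + n 2 + s
    · exfalso
      have hE01 := triE01 hS hmin hT
      have hE02 := triE02 hS hmin hT
      have hE12 := triE12 hS hmin hT
      have hV0 := edgeVl hS hmin hE01
      have hV1 := edgeVr hS hmin hE01
      have hV2 := edgeVr hS hmin hE02
      rw [if_pos hV0, if_pos hV1, if_pos hV2, if_pos hE01, if_pos hE02, if_pos hE12,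
        if_pos hT] at hchi
      norm_num at hchi
    rw [if_neg hT] at hchi
    by_cases hE01 : ∃ s ∈ S, m = n 0 + n 1 + s
    · by_cases hE02 : ∃ s ∈ S, m = n 0 + n 2 + s
      · by_cases hE12 : ∃ s ∈ S, m = n 1 + n 2 + s
        · -- hollow triangle: PF case
          refine Or.inr (Or.inr ⟨(m : ℤ) - ((n 0 : ℤ) + n 1 + n 2), ⟨?_, ?_⟩, ?_⟩)
          · rintro ⟨y, hy, hcast⟩
            exact hT ⟨y, hy, by omega⟩
          · intro s hs hs0
            obtain ⟨u, v, w, rfl⟩ := (memS3 hmin d01 d02 d12 s).1 hs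
            rcases Nat.eq_zero_or_pos u with rfl | hu
            · rcases Nat.eq_zero_or_pos v with rfl | hv
              · rcases Nat.eq_zero_or_pos w with rfl | hw
                · exfalso; simp at hs0
                · obtain ⟨w', rfl⟩ : ∃ w', w = w' + 1 := ⟨w - 1, by omega⟩
                  obtain ⟨s01, hs01, h01⟩ := hE01
                  refine ⟨s01 + (0 * n 0 + 0 * n 1 + w' * n 2),
                    hS.2.1 _ hs01 _ ((memS3 hmin d01 d02 d12 _).2 ⟨0, 0, w', rfl⟩), ?_⟩
                  have hc : (m : ℤ) = n 0 + n 1 + s01 := by exact_mod_cast congrArg Nat.cast h01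
                  push_cast
                  rw [hc]; ring
              · obtain ⟨v', rfl⟩ : ∃ v', v = v' + 1 := ⟨v - 1, by omega⟩
                obtain ⟨s02, hs02, h02⟩ := hE02
                refine ⟨s02 + (0 * n 0 + v' * n 1 + w * n 2),
                  hS.2.1 _ hs02 _ ((memS3 hmin d01 d02 d12 _).2 ⟨0, v', w, rfl⟩), ?_⟩
                have hc : (m : ℤ) = n 0 + n 2 + s02 := by exact_mod_cast congrArg Nat.cast h02
                push_cast
                rw [hc]; ring
            · obtain ⟨u', rfl⟩ : ∃ u', u = u' + 1 := ⟨u - 1, by omega⟩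
              obtain ⟨s12, hs12, h12⟩ := hE12
              refine ⟨s12 + (u' * n 0 + v * n 1 + w * n 2),
                hS.2.1 _ hs12 _ ((memS3 hmin d01 d02 d12 _).2 ⟨u', v, w, rfl⟩), ?_⟩
              have hc : (m : ℤ) = n 1 + n 2 + s12 := by exact_mod_cast congrArg Nat.cast h12
              push_cast
              rw [hc]; ring
          · rw [Fin.sum_univ_three]; ring
        · -- edges 01, 02 but not 12 : chi = 0
          exfalso
          have hV0 := edgeVl hS hmin hE01
          have hV1 := edgeVr hS hmin hE01
          have hV2 := edgeVr hS hmin hE02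
          rw [if_pos hV0, if_pos hV1, if_pos hV2, if_pos hE01, if_pos hE02,
            if_neg hE12] at hchi
          norm_num at hchi
      · by_cases hE12 : ∃ s ∈ S, m = n 1 + n 2 + s
        · -- edges 01, 12 but not 02 : chi = 0
          exfalso
          have hV0 := edgeVl hS hmin hE01
          have hV1 := edgeVr hS hmin hE01
          have hV2 := edgeVr hS hmin hE12
          rw [if_pos hV0, if_pos hV1, if_pos hV2, if_pos hE01, if_neg hE02,
            if_pos hE12] at hchi
          norm_num at hchi
        · -- only edge 01 : i = 2
          by_cases hV2 : ∃ s ∈ S, m = n 2 + s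
          · refine Or.inr (Or.inl ⟨2, key3 hmin d20 d21 d01 hV2
              (fun h => hE02 (Esymm h)) (fun h => hE12 (Esymm h)) ?_⟩)
            obtain ⟨s01, hs01, h01⟩ := hE01
            obtain ⟨u, v, w, rfl⟩ := (memS3 hmin d01 d02 d12 s01).1 hs01
            rcases Nat.eq_zero_or_pos w with rfl | hw
            · exact ⟨u + 1, v + 1, by rw [h01]; ring⟩
            · exfalso
              obtain ⟨w', rfl⟩ : ∃ w', w = w' + 1 := ⟨w - 1, by omega⟩
              exact hE02 ⟨u * n 0 + (v + 1) * n 1 + w' * n 2,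
                (memS3 hmin d01 d02 d12 _).2 ⟨u, v + 1, w', rfl⟩, by rw [h01]; ring⟩
          · exfalso
            have hV0 := edgeVl hS hmin hE01
            have hV1 := edgeVr hS hmin hE01
            rw [if_pos hV0, if_pos hV1, if_neg hV2, if_pos hE01, if_neg hE02,
              if_neg hE12] at hchi
            norm_num at hchi
    · by_cases hE02 : ∃ s ∈ S, m = n 0 + n 2 + s
      · by_cases hE12 : ∃ s ∈ S, m = n 1 + n 2 + s
        · -- edges 02, 12 but not 01 : chi = 0
          exfalso
          have hV0 := edgeVl hS hmin hE02
          have hV1 := edgeVl hS hmin hE12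
          have hV2 := edgeVr hS hmin hE02
          rw [if_pos hV0, if_pos hV1, if_pos hV2, if_neg hE01, if_pos hE02,
            if_pos hE12] at hchi
          norm_num at hchi
        · -- only edge 02 : i = 1
          by_cases hV1 : ∃ s ∈ S, m = n 1 + s
          · refine Or.inr (Or.inl ⟨1, key3 hmin d10 d12 d02 hV1
              (fun h => hE01 (Esymm h)) hE12 ?_⟩)
            obtain ⟨s02, hs02, h02⟩ := hE02
            obtain ⟨u, v, w, rfl⟩ := (memS3 hmin d01 d02 d12 s02).1 hs02
            rcases Nat.eq_zero_or_pos v with rfl | hv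
            · exact ⟨u + 1, w + 1, by rw [h02]; ring⟩
            · exfalso
              obtain ⟨v', rfl⟩ : ∃ v', v = v' + 1 := ⟨v - 1, by omega⟩
              exact hE01 ⟨u * n 0 + v' * n 1 + (w + 1) * n 2,
                (memS3 hmin d01 d02 d12 _).2 ⟨u, v', w + 1, rfl⟩, by rw [h02]; ring⟩
          · exfalso
            have hV0 := edgeVl hS hmin hE02
            have hV2 := edgeVr hS hmin hE02
            rw [if_pos hV0, if_neg hV1, if_pos hV2, if_neg hE01, if_pos hE02,
              if_neg hE12] at hchi
            norm_num at hchi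
      · by_cases hE12 : ∃ s ∈ S, m = n 1 + n 2 + s
        · -- only edge 12 : i = 0
          by_cases hV0 : ∃ s ∈ S, m = n 0 + s
          · refine Or.inr (Or.inl ⟨0, key3 hmin d01 d02 d12 hV0 hE01 hE02 ?_⟩)
            obtain ⟨s12, hs12, h12⟩ := hE12
            obtain ⟨u, v, w, rfl⟩ := (memS3 hmin d01 d02 d12 s12).1 hs12
            rcases Nat.eq_zero_or_pos u with rfl | hu
            · exact ⟨v + 1, w + 1, by rw [h12]; ring⟩
            · exfalso
              obtain ⟨u', rfl⟩ : ∃ u', u = u' + 1 := ⟨u - 1, by omega⟩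
              exact hE01 ⟨u' * n 0 + v * n 1 + (w + 1) * n 2,
                (memS3 hmin d01 d02 d12 _).2 ⟨u', v, w + 1, rfl⟩, by rw [h12]; ring⟩
          · exfalso
            have hV1 := edgeVl hS hmin hE12
            have hV2 := edgeVr hS hmin hE12
            rw [if_neg hV0, if_pos hV1, if_pos hV2, if_neg hE01, if_neg hE02,
              if_pos hE12] at hchi
            norm_num at hchi
        · -- no edges at all
          rw [if_neg hE01, if_neg hE02, if_neg hE12] at hchi
          by_cases hV0 : ∃ s ∈ S, m = n 0 + s
          · by_cases hV1 : ∃ s ∈ S, m = n 1 + s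
            · -- V0, V1 present (V2 irrelevant) : m = m_0
              refine Or.inr (Or.inl ⟨0, key3 hmin d01 d02 d12 hV0 hE01 hE02 ?_⟩)
              obtain ⟨s1, hs1, h1⟩ := hV1
              obtain ⟨u, v, w, rfl⟩ := (memS3 hmin d01 d02 d12 s1).1 hs1
              rcases Nat.eq_zero_or_pos u with rfl | hu
              · exact ⟨v + 1, w, by rw [h1]; ring⟩
              · exfalso
                obtain ⟨u', rfl⟩ : ∃ u', u = u' + 1 := ⟨u - 1, by omega⟩
                exact hE01 ⟨u' * n 0 + v * n 1 + w * n 2,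
                  (memS3 hmin d01 d02 d12 _).2 ⟨u', v, w, rfl⟩, by rw [h1]; ring⟩
            · by_cases hV2 : ∃ s ∈ S, m = n 2 + s
              · -- V0, V2, not V1 : m = m_0 via (0,2,1)
                refine Or.inr (Or.inl ⟨0, key3 hmin d02 d01 d21 hV0 hE02 hE01 ?_⟩)
                obtain ⟨s2, hs2, h2⟩ := hV2
                obtain ⟨u, v, w, rfl⟩ := (memS3 hmin d01 d02 d12 s2).1 hs2
                rcases Nat.eq_zero_or_pos u with rfl | hu
                · exact ⟨w + 1, v, by rw [h2]; ring⟩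
                · exfalso
                  obtain ⟨u', rfl⟩ : ∃ u', u = u' + 1 := ⟨u - 1, by omega⟩
                  exact hE02 ⟨u' * n 0 + v * n 1 + w * n 2,
                    (memS3 hmin d01 d02 d12 _).2 ⟨u', v, w, rfl⟩, by rw [h2]; ring⟩
              · -- only V0 : chi = 0
                exfalso
                rw [if_pos hV0, if_neg hV1, if_neg hV2] at hchi
                norm_num at hchi
          · by_cases hV1 : ∃ s ∈ S, m = n 1 + s
            · by_cases hV2 : ∃ s ∈ S, m = n 2 + s
              · -- V1, V2, not V0 : m = m_1 via (1,2,0)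
                refine Or.inr (Or.inl ⟨1, key3 hmin d12 d10 d20 hV1 hE12
                  (fun h => hE01 (Esymm h)) ?_⟩)
                obtain ⟨s2, hs2, h2⟩ := hV2
                obtain ⟨u, v, w, rfl⟩ := (memS3 hmin d01 d02 d12 s2).1 hs2
                rcases Nat.eq_zero_or_pos v with rfl | hv
                · exact ⟨w + 1, u, by rw [h2]; ring⟩
                · exfalso
                  obtain ⟨v', rfl⟩ : ∃ v', v = v' + 1 := ⟨v - 1, by omega⟩
                  exact hE12 ⟨u * n 0 + v' * n 1 + w * n 2,
                    (memS3 hmin d01 d02 d12 _).2 ⟨u, v', w, rfl⟩, by rw [h2]; ring⟩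
              · -- only V1 : chi = 0
                exfalso
                rw [if_neg hV0, if_pos hV1, if_neg hV2] at hchi
                norm_num at hchi
            · by_cases hV2 : ∃ s ∈ S, m = n 2 + s
              · -- only V2 : chi = 0
                exfalso
                rw [if_neg hV0, if_neg hV1, if_pos hV2] at hchi
                norm_num at hchi
              · -- no vertices : m = 0
                left
                obtain ⟨u, v, w, hmdec⟩ := (memS3 hmin d01 d02 d12 m).1 hm
                rcases Nat.eq_zero_or_pos u with rfl | hu
                · rcases Nat.eq_zero_or_pos v with rfl | hv
                  · rcases Nat.eq_zero_or_pos w with rfl | hw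
                    · simpa using hmdec
                    · exfalso
                      obtain ⟨w', rfl⟩ : ∃ w', w = w' + 1 := ⟨w - 1, by omega⟩
                      exact hV2 ⟨0 * n 0 + 0 * n 1 + w' * n 2,
                        (memS3 hmin d01 d02 d12 _).2 ⟨0, 0, w', rfl⟩, by rw [hmdec]; ring⟩
                  · exfalso
                    obtain ⟨v', rfl⟩ : ∃ v', v = v' + 1 := ⟨v - 1, by omega⟩
                    exact hV1 ⟨0 * n 0 + v' * n 1 + w * n 2,
                      (memS3 hmin d01 d02 d12 _).2 ⟨0, v', w, rfl⟩, by rw [hmdec]; ring⟩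
                · exfalso
                  obtain ⟨u', rfl⟩ : ∃ u', u = u' + 1 := ⟨u - 1, by omega⟩
                  exact hV0 ⟨u' * n 0 + v * n 1 + w * n 2,
                    (memS3 hmin d01 d02 d12 _).2 ⟨u', v, w, rfl⟩, by rw [hmdec]; ring⟩
  · rintro (rfl | ⟨i, hi⟩ | ⟨x, hxPF, hxm⟩)
    · -- m = 0
      rw [chiVal hm]
      have nV0 : ¬∃ s ∈ S, (0 : ℕ) = n 0 + s := by rintro ⟨s, -, h⟩; omega
      have nV1 : ¬∃ s ∈ S, (0 : ℕ) = n 1 + s := by rintro ⟨s, -, h⟩; omega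
      have nV2 : ¬∃ s ∈ S, (0 : ℕ) = n 2 + s := by rintro ⟨s, -, h⟩; omega
      have nE01 : ¬∃ s ∈ S, (0 : ℕ) = n 0 + n 1 + s := by rintro ⟨s, -, h⟩; omega
      have nE02 : ¬∃ s ∈ S, (0 : ℕ) = n 0 + n 2 + s := by rintro ⟨s, -, h⟩; omega
      have nE12 : ¬∃ s ∈ S, (0 : ℕ) = n 1 + n 2 + s := by rintro ⟨s, -, h⟩; omega
      have nT : ¬∃ s ∈ S, (0 : ℕ) = n 0 + n 1 + n 2 + s := by rintro ⟨s, -, h⟩; omega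
      rw [if_neg nV0, if_neg nV1, if_neg nV2, if_neg nE01, if_neg nE02, if_neg nE12, if_neg nT]
      norm_num
    · -- m = m_i
      fin_cases i
      · have hE01 : ¬∃ s ∈ S, m = n 0 + n 1 + s := noEdge3 hmin d01 d02 d12 hi
        have hE02 : ¬∃ s ∈ S, m = n 0 + n 2 + s := noEdge3 hmin d02 d01 d21 hi
        obtain ⟨hV0, hV12⟩ := infV3 hmin d01 d02 d12 hi
        have hT : ¬∃ s ∈ S, m = n 0 + n 1 + n 2 + s := fun h => hE01 (triE01 hS hmin h)
        rw [chiVal hm, if_pos hV0, if_neg hE01, if_neg hE02, if_neg hT]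
        by_cases hE12 : ∃ s ∈ S, m = n 1 + n 2 + s
        · rw [if_pos (edgeVl hS hmin hE12), if_pos (edgeVr hS hmin hE12), if_pos hE12]
          norm_num
        · rw [if_neg hE12]
          by_cases hV1 : ∃ s ∈ S, m = n 1 + s
          · by_cases hV2 : ∃ s ∈ S, m = n 2 + s
            · rw [if_pos hV1, if_pos hV2]; norm_num
            · rw [if_pos hV1, if_neg hV2]; norm_num
          · have hV2 := hV12.resolve_left hV1
            rw [if_neg hV1, if_pos hV2]; norm_num
      · have hE01 : ¬∃ s ∈ S, m = n 0 + n 1 + s :=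
          fun h => noEdge3 hmin d10 d12 d02 hi (Esymm h)
        have hE12 : ¬∃ s ∈ S, m = n 1 + n 2 + s := noEdge3 hmin d12 d10 d20 hi
        obtain ⟨hV1, hV02⟩ := infV3 hmin d10 d12 d02 hi
        have hT : ¬∃ s ∈ S, m = n 0 + n 1 + n 2 + s := fun h => hE01 (triE01 hS hmin h)
        rw [chiVal hm, if_pos hV1, if_neg hE01, if_neg hE12, if_neg hT]
        by_cases hE02 : ∃ s ∈ S, m = n 0 + n 2 + s
        · rw [if_pos (edgeVl hS hmin hE02), if_pos (edgeVr hS hmin hE02), if_pos hE02]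
          norm_num
        · rw [if_neg hE02]
          by_cases hV0 : ∃ s ∈ S, m = n 0 + s
          · by_cases hV2 : ∃ s ∈ S, m = n 2 + s
            · rw [if_pos hV0, if_pos hV2]; norm_num
            · rw [if_pos hV0, if_neg hV2]; norm_num
          · have hV2 := hV02.resolve_left hV0
            rw [if_neg hV0, if_pos hV2]; norm_num
      · have hE02 : ¬∃ s ∈ S, m = n 0 + n 2 + s :=
          fun h => noEdge3 hmin d20 d21 d01 hi (Esymm h)
        have hE12 : ¬∃ s ∈ S, m = n 1 + n 2 + s :=
          fun h => noEdge3 hmin d21 d20 d10 hi (Esymm h)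
        obtain ⟨hV2, hV01⟩ := infV3 hmin d20 d21 d01 hi
        have hT : ¬∃ s ∈ S, m = n 0 + n 1 + n 2 + s := fun h => hE02 (triE02 hS hmin h)
        rw [chiVal hm, if_pos hV2, if_neg hE02, if_neg hE12, if_neg hT]
        by_cases hE01 : ∃ s ∈ S, m = n 0 + n 1 + s
        · rw [if_pos (edgeVl hS hmin hE01), if_pos (edgeVr hS hmin hE01), if_pos hE01]
          norm_num
        · rw [if_neg hE01]
          by_cases hV0 : ∃ s ∈ S, m = n 0 + s
          · by_cases hV1 : ∃ s ∈ S, m = n 1 + s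
            · rw [if_pos hV0, if_pos hV1]; norm_num
            · rw [if_pos hV0, if_neg hV1]; norm_num
          · have hV1 := hV01.resolve_left hV0
            rw [if_neg hV0, if_pos hV1]; norm_num
    · -- PF case
      obtain ⟨hxnot, hxadd⟩ := hxPF
      have hsum : (m : ℤ) = n 0 + n 1 + n 2 + x := by rw [hxm, Fin.sum_univ_three]
      clear hxm
      obtain ⟨y2, hy2, hy2e⟩ := hxadd (n 2) (gen_mem hmin 2) hn2
      obtain ⟨y1, hy1, hy1e⟩ := hxadd (n 1) (gen_mem hmin 1) hn1
      obtain ⟨y0, hy0, hy0e⟩ := hxadd (n 0) (gen_mem hmin 0) hn0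
      have hE01 : ∃ s ∈ S, m = n 0 + n 1 + s := ⟨y2, hy2, by omega⟩
      have hE02 : ∃ s ∈ S, m = n 0 + n 2 + s := ⟨y1, hy1, by omega⟩
      have hE12 : ∃ s ∈ S, m = n 1 + n 2 + s := ⟨y0, hy0, by omega⟩
      have hT : ¬∃ s ∈ S, m = n 0 + n 1 + n 2 + s := by
        rintro ⟨s, hs, h⟩
        exact hxnot ⟨s, hs, by omega⟩
      rw [chiVal hm, if_pos (edgeVl hS hmin hE01), if_pos (edgeVr hS hmin hE01),
        if_pos (edgeVr hS hmin hE02), if_pos hE01, if_pos hE02, if_pos hE12, if_neg hT]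
      norm_num
end

section
/- A numerical semigroup S minimally generated by three elements has at most 2 pseudo-Frobenius numbers: |PF(S)| ≤ 2. -/
open scoped Classical

/-!
Write `p, q, r` for the generators. Every element of the Apéry set `Ap(S, p)` is a combination
`x * q + y * r`, uniquely so once `x < r / gcd r q`, and these exponent pairs form a staircase
`D ⊆ ℕ²` closed under going down. If `f ∈ PF(S)` then `f + p ∈ Ap(S, p)` and its exponent pair is a
maximal point of `D`. Given maximal points `A, B` with `B.1 < A.1`, the column `B.1 + 1` of `D`
ends at some height `Y` with `A.2 ≤ Y < B.2`, and at that inner corner `p ∣ (B.1 + 1) q + (Y + 1) r`.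
Three maximal points `C.1 < B.1 < A.1` give two such corners, and subtracting their relations
yields points `(0, v)` and `(u, 0)` of `D` with `u, v > 0` and `v r ≡ u q (mod p)`: two distinct
Apéry elements in one residue class, which is impossible.
-/

lemma Nat.exists_between_and_not_succ {P : ℕ → Prop} {a b : ℕ} (hab : a ≤ b) (ha : P a)
    (hb : ¬P b) : ∃ n, a ≤ n ∧ n < b ∧ P n ∧ ¬P (n + 1) := by
  induction b, hab using Nat.le_induction with
  | base => exact absurd ha hb
  | succ b hab ih =>
    by_cases hPb : P b
    · exact ⟨b, hab, b.lt_succ_self, hPb, hb⟩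
    · obtain ⟨n, han, hnb, hn⟩ := ih hPb
      exact ⟨n, han, hnb.trans b.lt_succ_self, hn⟩

lemma Maximal.eq_of_fst_eq {α β : Type*} [PartialOrder α] [LinearOrder β] {s : Set (α × β)}
    {P Q : α × β} (hP : Maximal (· ∈ s) P) (hQ : Maximal (· ∈ s) Q) (h : P.1 = Q.1) : P = Q := by
  rcases le_total P.2 Q.2 with h2 | h2
  · exact hP.eq_of_le hQ.prop ⟨h.le, h2⟩
  · exact (hQ.eq_of_le hP.prop ⟨h.ge, h2⟩).symm

lemma exists_lt_lt_of_ne {α β : Type*} [LinearOrder β] {s : Set α} (f : α → β) {a b c : α}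
    (ha : a ∈ s) (hb : b ∈ s) (hc : c ∈ s) (hab : f a ≠ f b) (hac : f a ≠ f c) (hbc : f b ≠ f c) :
    ∃ x ∈ s, ∃ y ∈ s, ∃ z ∈ s, f x < f y ∧ f y < f z := by
  rcases hab.lt_or_gt with h₁ | h₁ <;> rcases hac.lt_or_gt with h₂ | h₂ <;>
    rcases hbc.lt_or_gt with h₃ | h₃
  exacts [⟨a, ha, b, hb, c, hc, h₁, h₃⟩, ⟨a, ha, c, hc, b, hb, h₂, h₃⟩,
    absurd (h₂.trans h₁) h₃.not_gt, ⟨c, hc, a, ha, b, hb, h₂, h₁⟩,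
    ⟨b, hb, a, ha, c, hc, h₁, h₂⟩, absurd (h₃.trans h₁) h₂.not_gt,
    ⟨b, hb, c, hc, a, ha, h₃, h₂⟩, ⟨c, hc, b, hb, a, ha, h₃, h₁⟩]

def IsNumericalSemigroup.toAddSubmonoid {S : Set ℕ} (hS : IsNumericalSemigroup S) :
    AddSubmonoid ℕ where
  carrier := S
  add_mem' ha hb := hS.2.1 _ ha _ hb
  zero_mem' := hS.1

lemma AddSubmonoid.mul_mem_of_mem {M : AddSubmonoid ℕ} {q : ℕ} (hq : q ∈ M) (x : ℕ) :
    x * q ∈ M := by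
  simpa only [smul_eq_mul] using nsmul_mem hq x

lemma AddSubmonoid.mul_add_mul_mem {M : AddSubmonoid ℕ} {q r : ℕ} (hq : q ∈ M) (hr : r ∈ M)
    (x y : ℕ) : x * q + y * r ∈ M :=
  add_mem (mul_mem_of_mem hq x) (mul_mem_of_mem hr y)

def PFNat (S : Set ℕ) : Set ℕ :=
  {f | f ∉ S ∧ ∀ s ∈ S, s ≠ 0 → f + s ∈ S}

lemma natCast_mem_PF {S : Set ℕ} {f : ℕ} : (f : ℤ) ∈ PF S ↔ f ∈ PFNat S := by
  simp only [PF, PFNat, Set.mem_ofPred_eq]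
  norm_cast
  simp

lemma PF_eq_image_PFNat {S : Set ℕ} (h : ∀ x ∈ PF S, 0 ≤ x) : PF S = (↑) '' PFNat S := by
  ext x
  constructor
  · intro hx
    lift x to ℕ using h x hx
    exact ⟨x, natCast_mem_PF.1 hx, rfl⟩
  · rintro ⟨f, hf, rfl⟩
    exact natCast_mem_PF.2 hf

/-- Adding a negative pseudo-Frobenius number repeatedly to a nonzero element of `S` stays in `S`
and decreases, so it reaches `0`. -/
lemma exists_natCast_eq_neg_of_mem_PF {S : Set ℕ} {x : ℤ} (hx : x ∈ PF S) (hx0 : x < 0)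
    {s : ℕ} (hs : s ∈ S) (hs0 : s ≠ 0) : ∃ m ∈ S, m ≠ 0 ∧ (m : ℤ) = -x := by
  induction s using Nat.strong_induction_on with
  | _ s ih =>
    obtain ⟨y, hy, hyx⟩ := hx.2 s hs hs0
    by_cases hy0 : y = 0
    · exact ⟨s, hs, hs0, by omega⟩
    · exact ih y (by omega) hy hy0

lemma IsMinGen.mem {d : ℕ} {S : Set ℕ} {n : Fin d → ℕ} (hmin : IsMinGen S n) (i : Fin d) :
    n i ∈ S := by
  rw [hmin.1]
  exact ⟨Pi.single i 1, by simp [Pi.single_apply, ite_mul]⟩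

lemma IsMinGen.nonneg_of_mem_PF {d : ℕ} {S : Set ℕ} {n : Fin d → ℕ} (hmin : IsMinGen S n)
    (hd : 1 < d) {x : ℤ} (hx : x ∈ PF S) : 0 ≤ x := by
  by_contra! hx0
  have hgen : ∀ i, (n i : ℤ) = -x := by
    intro i
    obtain ⟨hi0, hirr⟩ := hmin.2.2 i
    obtain ⟨m, hm, hm0, hmx⟩ := exists_natCast_eq_neg_of_mem_PF hx hx0 (hmin.mem i) hi0
    obtain ⟨y, hy, hyx⟩ := hx.2 (n i) (hmin.mem i) hi0
    have hy0 : y = 0 := by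
      by_contra hy0
      exact hirr ⟨y, hy, m, hm, hy0, hm0, by omega⟩
    omega
  have h01 := hmin.2.1 (Nat.cast_injective ((hgen ⟨0, by omega⟩).trans (hgen ⟨1, hd⟩).symm))
  simp at h01

def aperySet (M : AddSubmonoid ℕ) (p : ℕ) : Set ℕ :=
  {w | w ∈ M ∧ ∀ s ∈ M, w ≠ p + s}

namespace aperySet

variable {M : AddSubmonoid ℕ} {p : ℕ}

lemma mem_of_add_mem {w s : ℕ} (hw : w ∈ M) (hs : s ∈ M) (h : w + s ∈ aperySet M p) :
    w ∈ aperySet M p :=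
  ⟨hw, fun t ht hwt => h.2 (t + s) (add_mem ht hs) (by rw [hwt, add_assoc])⟩

lemma eq_of_modEq (hp : p ∈ M) {w w' : ℕ} (hw : w ∈ aperySet M p) (hw' : w' ∈ aperySet M p)
    (h : w ≡ w' [MOD p]) : w = w' := by
  wlog hle : w ≤ w' generalizing w w'
  · exact (this hw' hw h.symm (le_of_not_ge hle)).symm
  obtain ⟨k, hk⟩ := (Nat.modEq_iff_dvd' hle).1 h
  rcases k with _ | k
  · omega
  · refine absurd ?_ (hw'.2 (w + k * p) (add_mem hw.1 (AddSubmonoid.mul_mem_of_mem hp k)))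
    rw [mul_add_one] at hk
    linarith [Nat.sub_add_cancel hle, mul_comm p k]

lemma exists_modEq (hp : 0 < p) {m : ℕ} (hm : m ∈ M) : ∃ w ∈ aperySet M p, w ≡ m [MOD p] := by
  induction m using Nat.strong_induction_on with
  | _ m ih =>
    by_cases h : ∃ s ∈ M, m = p + s
    · obtain ⟨s, hs, rfl⟩ := h
      obtain ⟨w, hw, hws⟩ := ih s (by omega) hs
      exact ⟨w, hw, hws.trans Nat.add_modEq_left.symm⟩
    · push Not at h
      exact ⟨m, ⟨hm, h⟩, rfl⟩

lemma add_mem_of_mem_PFNat (hp : p ∈ M) (hp0 : p ≠ 0) {f : ℕ} (hf : f ∈ PFNat M) :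
    f + p ∈ aperySet M p :=
  ⟨hf.2 p hp hp0, fun s hs hfs => hf.1 (by rwa [show f = s by omega])⟩

lemma add_add_notMem_of_mem_PFNat {f s : ℕ} (hf : f ∈ PFNat M) (hs : s ∈ M) (hs0 : s ≠ 0) :
    f + p + s ∉ aperySet M p :=
  fun h => h.2 (f + s) (hf.2 s hs hs0) (by ring)

end aperySet

lemma IsMinGen.aperySet_subset {S : Set ℕ} {n : Fin 3 → ℕ} (hS : IsNumericalSemigroup S)
    (hmin : IsMinGen S n) :
    aperySet hS.toAddSubmonoid (n 0) ⊆ {w | ∃ x y, w = x * n 1 + y * n 2} := by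
  intro w hw
  obtain ⟨a, ha⟩ : w ∈ genBy n := hmin.1 ▸ hw.1
  rw [Fin.sum_univ_three] at ha
  rcases h : a 0 with _ | k
  · exact ⟨a 1, a 2, by simpa [h] using ha⟩
  · have hmem : k * n 0 + (a 1 * n 1 + a 2 * n 2) ∈ hS.toAddSubmonoid :=
      add_mem (AddSubmonoid.mul_mem_of_mem (hmin.mem 0) k)
        (AddSubmonoid.mul_add_mul_mem (hmin.mem 1) (hmin.mem 2) _ _)
    exact absurd (by rw [ha, h]; ring) (hw.2 _ hmem)

section Lattice

variable {q r : ℕ}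

lemma exists_lt_mul_add_mul_eq (hr : 0 < r) (x y : ℕ) :
    ∃ X Y, X < r / r.gcd q ∧ X * q + Y * r = x * q + y * r := by
  have hrq : r / r.gcd q * q = q / r.gcd q * r := by
    rw [Nat.div_mul_right_comm (Nat.gcd_dvd_left r q),
      Nat.div_mul_right_comm (Nat.gcd_dvd_right r q), mul_comm]
  refine ⟨x % (r / r.gcd q), y + x / (r / r.gcd q) * (q / r.gcd q),
    Nat.mod_lt _ (Nat.div_pos (Nat.gcd_le_left q hr) (Nat.gcd_pos_of_pos_left q hr)), ?_⟩
  conv_rhs => rw [← Nat.mod_add_div x (r / r.gcd q)]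
  linear_combination (x / (r / r.gcd q)) * hrq.symm

lemma eq_of_mul_add_mul_eq (hr : 0 < r) {X Y X' Y' : ℕ} (hX : X < r / r.gcd q)
    (hX' : X' < r / r.gcd q) (h : X * q + Y * r = X' * q + Y' * r) : X = X' ∧ Y = Y' := by
  have hmod : X * q ≡ X' * q [MOD r] := by
    simpa [Nat.ModEq, Nat.add_mul_mod_self_right] using congrArg (· % r) h
  obtain rfl := (Nat.ModEq.cancel_right_div_gcd hr hmod).eq_of_lt_of_lt hX hX'
  exact ⟨rfl, Nat.eq_of_mul_eq_mul_right hr (by omega)⟩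

end Lattice

/-- Exponents `(x, y)` of the Apéry elements `x * q + y * r`, normalised by `x < r / gcd r q` so
that each Apéry element has exactly one. -/
def aperyStaircase (M : AddSubmonoid ℕ) (p q r : ℕ) : Set (ℕ × ℕ) :=
  {v | v.1 < r / r.gcd q ∧ v.1 * q + v.2 * r ∈ aperySet M p}

namespace aperyStaircase

variable {M : AddSubmonoid ℕ} {p q r : ℕ}

lemma mem_of_le (hq : q ∈ M) (hr : r ∈ M) {u v : ℕ × ℕ} (hv : v ∈ aperyStaircase M p q r)
    (huv : u ≤ v) : u ∈ aperyStaircase M p q r := by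
  obtain ⟨c, hc⟩ := Nat.exists_eq_add_of_le huv.1
  obtain ⟨e, he⟩ := Nat.exists_eq_add_of_le huv.2
  refine ⟨huv.1.trans_lt hv.1, aperySet.mem_of_add_mem (AddSubmonoid.mul_add_mul_mem hq hr _ _)
    (AddSubmonoid.mul_add_mul_mem hq hr c e) ?_⟩
  convert hv.2 using 1
  rw [hc, he]
  ring

lemma eq_of_cast_eq (hp : p ∈ M) (hr0 : 0 < r) {u v : ℕ × ℕ} (hu : u ∈ aperyStaircase M p q r)
    (hv : v ∈ aperyStaircase M p q r)
    (h : ((u.1 * q + u.2 * r : ℕ) : ZMod p) = ((v.1 * q + v.2 * r : ℕ) : ZMod p)) : u = v := by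
  obtain ⟨h1, h2⟩ := eq_of_mul_add_mul_eq hr0 hu.1 hv.1
    (aperySet.eq_of_modEq hp hu.2 hv.2 ((ZMod.natCast_eq_natCast_iff _ _ _).1 h))
  exact Prod.ext h1 h2

lemma exists_mem_cast_eq (hp0 : 0 < p) (hr0 : 0 < r)
    (hAp : aperySet M p ⊆ {w | ∃ x y, w = x * q + y * r}) {m : ℕ} (hm : m ∈ M) :
    ∃ v ∈ aperyStaircase M p q r, ((v.1 * q + v.2 * r : ℕ) : ZMod p) = m := by
  obtain ⟨w, hw, hwm⟩ := aperySet.exists_modEq hp0 hm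
  obtain ⟨x, y, rfl⟩ := hAp hw
  obtain ⟨X, Y, hX, hXY⟩ := exists_lt_mul_add_mul_eq (q := q) hr0 x y
  exact ⟨(X, Y), ⟨hX, hXY ▸ hw⟩, hXY ▸ (ZMod.natCast_eq_natCast_iff _ _ _).2 hwm⟩

/-- The Apéry element in the class of the corner is not the corner; were it nonzero, removing one
`q` or one `r` from it would give a point of the staircase congruent to a neighbour of the corner. -/
lemma cast_eq_zero_of_corner (hp : p ∈ M) (hp0 : 0 < p) (hq : q ∈ M) (hr : r ∈ M) (hr0 : 0 < r)
    (hAp : aperySet M p ⊆ {w | ∃ x y, w = x * q + y * r}) {X Y : ℕ}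
    (hleft : (X, Y + 1) ∈ aperyStaircase M p q r) (hbelow : (X + 1, Y) ∈ aperyStaircase M p q r)
    (hcorner : (X + 1, Y + 1) ∉ aperyStaircase M p q r) :
    (((X + 1) * q + (Y + 1) * r : ℕ) : ZMod p) = 0 := by
  obtain ⟨⟨a, b⟩, hv, hvV⟩ :=
    exists_mem_cast_eq hp0 hr0 hAp (AddSubmonoid.mul_add_mul_mem hq hr (X + 1) (Y + 1))
  rcases a with _ | a
  · rcases b with _ | b
    · simpa using hvV.symm
    · have h := eq_of_cast_eq hp hr0 (mem_of_le (u := (0, b)) hq hr hv (by simp)) hbelow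
        (by push_cast at hvV ⊢; linear_combination hvV)
      simp at h
  · have h := eq_of_cast_eq hp hr0 (mem_of_le (u := (a, b)) hq hr hv (by simp)) hleft
      (by push_cast at hvV ⊢; linear_combination hvV)
    obtain ⟨rfl, rfl⟩ := Prod.mk.inj h
    exact absurd hv hcorner

lemma exists_corner (hp : p ∈ M) (hp0 : 0 < p) (hq : q ∈ M) (hr : r ∈ M) (hr0 : 0 < r)
    (hAp : aperySet M p ⊆ {w | ∃ x y, w = x * q + y * r}) {A B : ℕ × ℕ}
    (hA : A ∈ aperyStaircase M p q r) (hB : Maximal (· ∈ aperyStaircase M p q r) B)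
    (hBA : B.1 < A.1) :
    ∃ Y, A.2 ≤ Y ∧ Y < B.2 ∧ (((B.1 + 1) * q + (Y + 1) * r : ℕ) : ZMod p) = 0 := by
  have hbelow : (B.1 + 1, A.2) ∈ aperyStaircase M p q r := mem_of_le hq hr hA ⟨hBA, le_rfl⟩
  have hright : (B.1 + 1, B.2) ∉ aperyStaircase M p q r :=
    fun h => Nat.not_succ_le_self _ (hB.2 h ⟨B.1.le_succ, le_rfl⟩).1
  have hAB : A.2 ≤ B.2 := by
    by_contra! h
    exact hright (mem_of_le hq hr hbelow ⟨le_rfl, h.le⟩)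
  obtain ⟨Y, hAY, hYB, hY, hY1⟩ :=
    Nat.exists_between_and_not_succ (P := fun y => (B.1 + 1, y) ∈ aperyStaircase M p q r)
      hAB hbelow hright
  exact ⟨Y, hAY, hYB, cast_eq_zero_of_corner hp hp0 hq hr hr0 hAp
    (mem_of_le hq hr hB.prop ⟨le_rfl, hYB⟩) hY hY1⟩

lemma false_of_maximal_of_lt_of_lt (hp : p ∈ M) (hp0 : 0 < p) (hq : q ∈ M) (hr : r ∈ M) (hr0 : 0 < r)
    (hAp : aperySet M p ⊆ {w | ∃ x y, w = x * q + y * r}) {A B C : ℕ × ℕ}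
    (hA : Maximal (· ∈ aperyStaircase M p q r) A) (hB : Maximal (· ∈ aperyStaircase M p q r) B)
    (hC : Maximal (· ∈ aperyStaircase M p q r) C) (hBA : B.1 < A.1) (hCB : C.1 < B.1) : False := by
  obtain ⟨Y₁, -, hY₁B, h₁⟩ := exists_corner hp hp0 hq hr hr0 hAp hA.prop hB hBA
  obtain ⟨Y₂, hBY₂, hY₂C, h₂⟩ := exists_corner hp hp0 hq hr hr0 hAp hB.prop hC hCB
  obtain ⟨u, hu⟩ := Nat.exists_eq_add_of_lt hCB
  obtain ⟨v, hv⟩ := Nat.exists_eq_add_of_lt (hY₁B.trans_le hBY₂)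
  rw [hu] at h₁
  rw [hv] at h₂
  have h := eq_of_cast_eq (u := (0, v + 1)) (v := (u + 1, 0)) hp hr0
    (mem_of_le hq hr hC.prop ⟨Nat.zero_le _, by omega⟩)
    (mem_of_le hq hr hA.prop ⟨by omega, Nat.zero_le _⟩)
    (by push_cast at h₁ h₂ ⊢; linear_combination h₂ - h₁)
  simp at h

lemma exists_maximal_of_mem_PFNat (hp : p ∈ M) (hp0 : p ≠ 0) (hq : q ∈ M) (hr : r ∈ M)
    (hr0 : 0 < r) (hAp : aperySet M p ⊆ {w | ∃ x y, w = x * q + y * r}) {f : ℕ}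
    (hf : f ∈ PFNat M) :
    ∃ P, Maximal (· ∈ aperyStaircase M p q r) P ∧ P.1 * q + P.2 * r = f + p := by
  have hfp := aperySet.add_mem_of_mem_PFNat hp hp0 hf
  obtain ⟨x, y, hxy⟩ := hAp hfp
  obtain ⟨X, Y, hX, hXY⟩ := exists_lt_mul_add_mul_eq (q := q) hr0 x y
  rw [← hxy] at hXY
  refine ⟨(X, Y), ⟨⟨hX, hXY ▸ hfp⟩, fun U hUD hle => ?_⟩, hXY⟩
  obtain ⟨c, hc⟩ := Nat.exists_eq_add_of_le hle.1
  obtain ⟨e, he⟩ := Nat.exists_eq_add_of_le hle.2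
  have hU : U.1 * q + U.2 * r = f + p + (c * q + e * r) := by
    rw [hc, he, ← hXY]
    ring
  by_cases h0 : c * q + e * r = 0
  · obtain ⟨h1, h2⟩ := eq_of_mul_add_mul_eq hr0 hUD.1 hX (by rw [hU, h0, hXY, add_zero])
    exact ⟨h1.le, h2.le⟩
  · exact absurd (hU ▸ hUD.2) (aperySet.add_add_notMem_of_mem_PFNat hf
      (AddSubmonoid.mul_add_mul_mem hq hr c e) h0)

lemma eq_or_eq_of_mem_PFNat (hp : p ∈ M) (hp0 : 0 < p) (hq : q ∈ M) (hr : r ∈ M) (hr0 : 0 < r)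
    (hAp : aperySet M p ⊆ {w | ∃ x y, w = x * q + y * r}) {f₁ f₂ f₃ : ℕ}
    (h₁ : f₁ ∈ PFNat M) (h₂ : f₂ ∈ PFNat M) (h₃ : f₃ ∈ PFNat M) :
    f₁ = f₂ ∨ f₁ = f₃ ∨ f₂ = f₃ := by
  obtain ⟨P₁, hP₁, hf₁⟩ := exists_maximal_of_mem_PFNat hp hp0.ne' hq hr hr0 hAp h₁
  obtain ⟨P₂, hP₂, hf₂⟩ := exists_maximal_of_mem_PFNat hp hp0.ne' hq hr hr0 hAp h₂
  obtain ⟨P₃, hP₃, hf₃⟩ := exists_maximal_of_mem_PFNat hp hp0.ne' hq hr hr0 hAp h₃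
  by_contra! hne
  have hfst : ∀ {P Q : ℕ × ℕ} {f g : ℕ}, Maximal (· ∈ aperyStaircase M p q r) P →
      Maximal (· ∈ aperyStaircase M p q r) Q → P.1 * q + P.2 * r = f + p →
      Q.1 * q + Q.2 * r = g + p → f ≠ g → P.1 ≠ Q.1 := by
    intro P Q f g hP hQ hPf hQg hfg h
    rw [hP.eq_of_fst_eq hQ h, hQg] at hPf
    omega
  obtain ⟨C, hC, B, hB, A, hA, hCB, hBA⟩ := exists_lt_lt_of_ne
    (s := {P | Maximal (· ∈ aperyStaircase M p q r) P}) Prod.fst hP₁ hP₂ hP₃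
    (hfst hP₁ hP₂ hf₁ hf₂ hne.1) (hfst hP₁ hP₃ hf₁ hf₃ hne.2.1) (hfst hP₂ hP₃ hf₂ hf₃ hne.2.2)
  exact false_of_maximal_of_lt_of_lt hp hp0 hq hr hr0 hAp hA hB hC hBA hCB

end aperyStaircase

/-- A numerical semigroup minimally generated by three elements has at most two
pseudo-Frobenius numbers. -/
theorem pf_card_le_two_threeGen {S : Set ℕ} {n : Fin 3 → ℕ}
    (hS : IsNumericalSemigroup S) (hmin : IsMinGen S n) :
    (PF S).Finite ∧ (PF S).ncard ≤ 2 := by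
  rw [PF_eq_image_PFNat fun x hx => hmin.nonneg_of_mem_PF (by decide) hx]
  have hfin : (PFNat S).Finite := hS.2.2.subset fun f hf => hf.1
  refine ⟨hfin.image _, ?_⟩
  rw [Set.ncard_image_of_injective _ Nat.cast_injective]
  by_contra! h
  obtain ⟨a, b, c, ha, hb, hc, hab, hac, hbc⟩ := (Set.two_lt_ncard_iff hfin).1 h
  have hpos : ∀ i, 0 < n i := fun i => Nat.pos_of_ne_zero (hmin.2.2 i).1
  rcases aperyStaircase.eq_or_eq_of_mem_PFNat (M := hS.toAddSubmonoid) (hmin.mem 0) (hpos 0)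
    (hmin.mem 1) (hmin.mem 2) (hpos 2) (hmin.aperySet_subset hS) ha hb hc with h | h | h
  exacts [hab h, hac h, hbc h]
end

section
/- Let t₁,…,t_d ∈ ℤ_{≥2} be pairwise coprime and L = t₁⋯t_d. If k ∈ ℕ, F ⊆ [d] with |F| ≥ k+1, and kL = Σ_{i=1}^d a_i(L/t_i) with a_i ∈ ℕ and a_i > 0 for all i ∈ F, then a contradiction follows; i.e., no such factorization exists. Equivalently, every factorization of kL in ⟨L/t₁,…,L/t_d⟩ has support of size at most k. -/
open scoped Classical

/-- No factorization of `kL` in a supersymmetric semigroup has support of size `≥ k + 1`. -/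
theorem supersymmetric_support_le {d : ℕ} (hd : 0 < d) (t : Fin d → ℕ)
    (ht : ∀ i, 2 ≤ t i) (hcop : ∀ i j, i ≠ j → Nat.Coprime (t i) (t j))
    (k : ℕ) (F : Finset (Fin d)) (hF : k + 1 ≤ F.card) (a : Fin d → ℕ)
    (ha : ∀ i ∈ F, 0 < a i)
    (hfac : k * ∏ j, t j = ∑ i, a i * ((∏ j, t j) / t i)) :
    False := by
  have hLpos : 0 < ∏ j, t j := Finset.prod_pos fun i _ => lt_of_lt_of_le two_pos (ht i)
  have hdiv : ∀ i, t i ∣ ∏ j, t j := fun i => Finset.dvd_prod_of_mem t (Finset.mem_univ i)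
  have htpos : ∀ i, 0 < t i := fun i => lt_of_lt_of_le two_pos (ht i)
  have hP : ∀ i, (∏ j, t j) / t i = ∏ j ∈ Finset.univ.erase i, t j := by
    intro i
    rw [← Finset.mul_prod_erase Finset.univ t (Finset.mem_univ i)]
    exact Nat.mul_div_cancel_left _ (htpos i)
  have key : ∀ i ∈ F, t i ≤ a i := by
    intro i hi
    have hcopP : Nat.Coprime (t i) ((∏ j, t j) / t i) := by
      rw [hP]
      exact Nat.Coprime.prod_right fun j hj =>
        hcop i j fun h => (Finset.mem_erase.mp hj).1 h.symm
    have h1 : t i ∣ k * ∏ j, t j := Dvd.dvd.mul_left (hdiv i) k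
    have h2 : ∀ j ∈ Finset.univ.erase i, t i ∣ a j * ((∏ j, t j) / t j) := by
      intro j hj
      apply Dvd.dvd.mul_left
      rw [hP]
      exact Finset.dvd_prod_of_mem t (Finset.mem_erase.mpr
        ⟨fun h => (Finset.mem_erase.mp hj).1 h.symm, Finset.mem_univ i⟩)
    rw [hfac, ← Finset.add_sum_erase Finset.univ _ (Finset.mem_univ i)] at h1
    have h3 : t i ∣ a i * ((∏ j, t j) / t i) := by
      have := Nat.dvd_sub h1 (Finset.dvd_sum h2)
      rwa [Nat.add_sub_cancel] at this
    exact Nat.le_of_dvd (ha i hi) (hcopP.dvd_of_dvd_mul_right h3)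
  have hbig : (k + 1) * ∏ j, t j ≤ ∑ i, a i * ((∏ j, t j) / t i) := by
    calc (k + 1) * ∏ j, t j ≤ F.card * ∏ j, t j := Nat.mul_le_mul_right _ hF
      _ = ∑ i ∈ F, t i * ((∏ j, t j) / t i) := by
          rw [Finset.sum_congr rfl fun i _ => Nat.mul_div_cancel' (hdiv i)]
          simp [Finset.sum_const, mul_comm]
      _ ≤ ∑ i ∈ F, a i * ((∏ j, t j) / t i) :=
          Finset.sum_le_sum fun i hi => Nat.mul_le_mul_right _ (key i hi)
      _ ≤ ∑ i, a i * ((∏ j, t j) / t i) :=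
          Finset.sum_le_sum_of_subset F.subset_univ
  rw [← hfac] at hbig
  have : k * ∏ j, t j < (k + 1) * ∏ j, t j :=
    (Nat.mul_lt_mul_right hLpos).mpr (Nat.lt_succ_self k)
  omega
end

section
/- Fix coprime k, k' ∈ ℕ_{>0}, numerical semigroups S and S', and suppose k ∈ S, k' ∈ S'. If a ∈ S with a ≠ 0, b ∈ S' with b ≠ 0, and kk' = k'(a + m) + k(b + m') for some m ∈ S, m' ∈ S', then a contradiction follows. Equivalently, kk' − k'a − kb ∉ k'S + kS' whenever a, b are nonzero. -/
open scoped Classical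

/-- Key step in the disjoint union theorem: for coprime positive `k ∈ S`, `k' ∈ S'` and
nonzero `a ∈ S`, `b ∈ S'`, the equation `kk' = k'(a + m) + k(b + m')` is impossible. -/
theorem no_mixed_face (k k' : ℕ) (hk0 : 0 < k) (hk'0 : 0 < k')
    (hcop : Nat.Coprime k k') (S S' : Set ℕ)
    (hS : IsNumericalSemigroup S) (hS' : IsNumericalSemigroup S')
    (hk : k ∈ S) (hk' : k' ∈ S')
    (a : ℕ) (ha : a ∈ S) (ha0 : a ≠ 0) (b : ℕ) (hb : b ∈ S') (hb0 : b ≠ 0)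
    (m : ℕ) (hm : m ∈ S) (m' : ℕ) (hm' : m' ∈ S')
    (heq : k * k' = k' * (a + m) + k * (b + m')) :
    False := by
  have h1 : k ∣ k' * (a + m) := ⟨k' - (b + m'), by
    have : k * (b + m') ≤ k * k' := by omega
    have : b + m' ≤ k' := Nat.le_of_mul_le_mul_left this hk0
    have : k * (k' - (b + m')) = k * k' - k * (b + m') := Nat.mul_sub k k' (b + m')
    omega⟩
  have h2 : k ∣ a + m := hcop.dvd_of_dvd_mul_left h1
  have h3 : k ≤ a + m := Nat.le_of_dvd (by omega) h2
  nlinarith [Nat.one_le_iff_ne_zero.mpr hb0]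
end
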